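/- arXiv:1506.03306 — 7 statements merged into one kernel-verified Lean document; each statement's English description precedes it below -/
import Mathlib

section
/- Let G be a simple graph whose vertex set is the disjoint union of two sets A and B with |A| = a ≤ b = |B|, such that both A and B induce complete subgraphs of G and G contains no complete subgraph on b+1 vertices. Then there is a matching of non-edges between A and B covering A, i.e., there exists an injective map f : A → B such that for every x ∈ A the vertices x and f(x) are not adjacent in G. -/
/-- If the vertex set of `G` is the disjoint union of `A` and `B`
with `|A| ≤ |B|`, both `A` and `B` induce complete subgraphs, and `G` has no
complete subgraph on `|B| + 1` vertices, then there is a matching of non-edges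
between `A` and `B` covering `A`. -/
theorem nonedge_matching_of_two_cliques
    {V : Type*} [Fintype V] [DecidableEq V]
    (G : SimpleGraph V) (A B : Finset V)
    (hdisj : Disjoint A B) (hcover : A ∪ B = Finset.univ)
    (hab : A.card ≤ B.card)
    (hA : G.IsClique (A : Set V)) (hB : G.IsClique (B : Set V))
    (hfree : G.CliqueFree (B.card + 1)) :
    ∃ f : A → B, Function.Injective f ∧ ∀ x : A, ¬ G.Adj (x : V) (f x : V) := by
  classical
  set t : A → Finset V := fun x => B.filter (fun y => ¬ G.Adj (x : V) y) with ht
  have hall : ∀ s : Finset A, s.card ≤ (s.biUnion t).card := by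
    intro s
    by_contra hlt
    push_neg at hlt
    set N := s.biUnion t with hN
    set S := s.image Subtype.val with hS
    have hScard : S.card = s.card := Finset.card_image_of_injective _ Subtype.val_injective
    have hSA : S ⊆ A := by
      intro x hx
      simp only [hS, Finset.mem_image] at hx
      obtain ⟨a, _, rfl⟩ := hx
      exact a.2
    have hNB : N ⊆ B := by
      intro y hy
      simp only [hN, Finset.mem_biUnion, ht, Finset.mem_filter] at hy
      obtain ⟨a, _, hyB, _⟩ := hy
      exact hyB
    set C := S ∪ (B \ N) with hC
    have hdisjC : Disjoint S (B \ N) :=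
      (hdisj.mono_left hSA).mono_right (Finset.sdiff_subset)
    have hCcard : C.card = S.card + (B \ N).card := Finset.card_union_of_disjoint hdisjC
    have hsd : (B \ N).card = B.card - N.card := Finset.card_sdiff_of_subset hNB
    have hNle : N.card ≤ B.card := Finset.card_le_card hNB
    have hCge : B.card + 1 ≤ C.card := by omega
    have hclique : G.IsClique (C : Set V) := by
      intro x hx y hy hxy
      simp only [hC, Finset.coe_union, Set.mem_union, Finset.coe_sdiff, Set.mem_diff,
        Finset.mem_coe] at hx hy
      have cross : ∀ u v : V, u ∈ S → v ∈ B ∧ v ∉ N → u ≠ v → G.Adj u v := by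
        intro u v hu hv huv
        simp only [hS, Finset.mem_image] at hu
        obtain ⟨a, has, rfl⟩ := hu
        by_contra hadj
        exact hv.2 (Finset.mem_biUnion.2 ⟨a, has, Finset.mem_filter.2 ⟨hv.1, hadj⟩⟩)
      rcases hx with hx | hx
      · rcases hy with hy | hy
        · exact hA (hSA hx) (hSA hy) hxy
        · exact cross x y hx hy hxy
      · rcases hy with hy | hy
        · exact (cross y x hy hx (Ne.symm hxy)).symm
        · exact hB hx.1 hy.1 hxy
    obtain ⟨D, hDC, hDcard⟩ := Finset.exists_subset_card_eq hCge
    exact hfree D ⟨hclique.subset (by exact_mod_cast hDC), hDcard⟩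
  obtain ⟨f, hfinj, hf⟩ := (Finset.all_card_le_biUnion_card_iff_exists_injective t).1 hall
  refine ⟨fun x => ⟨f x, ?_⟩, ?_, ?_⟩
  · exact (Finset.mem_filter.1 (hf x)).1
  · intro x y hxy
    exact hfinj (congrArg Subtype.val hxy)
  · intro x
    exact (Finset.mem_filter.1 (hf x)).2
end

section
/- If G is a complete multipartite graph (the complement of a disjoint union of cliques), then every greedy partition of G has the same size, namely the size of the largest independent set (largest part) of G. -/
/-! Parts of a good partition are cliques, so each meets every fiber of `p` (an independent set)
at most once; as the parts cover `V`, no fiber is larger than `#P`. Conversely, greediness means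
that the parts of size at most `l` meet at most `l` fibers together, since vertices from `l + 1`
distinct fibers form an `(l + 1)`-clique. A part `C` already meets `#C` fibers, so it meets
exactly the fibers met by the parts of size at most `#C`. Hence every part meets every fiber met
by a smallest part, and since the parts are disjoint, `#P` is bounded by the size of such a
fiber. -/

/-- A good partition of `G`: a partition of the vertex set into nonempty parts,
each inducing a clique; it is greedy if for every `l ≥ 1` the union of all parts
of size at most `l` spans no complete subgraph on `l+1` vertices. -/
def IsGreedyPartition {V : Type*} [Fintype V] [DecidableEq V]
    (G : SimpleGraph V) (P : Finset (Finset V)) : Prop :=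
  (∀ C ∈ P, C.Nonempty) ∧
  (∀ C ∈ P, G.IsClique (C : Set V)) ∧
  (∀ v : V, ∃! C, C ∈ P ∧ v ∈ C) ∧
  (∀ l : ℕ, 1 ≤ l → ∀ s : Finset V,
    (∀ v ∈ s, ∃ C ∈ P, v ∈ C ∧ C.card ≤ l) → ¬ G.IsNClique (l + 1) s)

open Finset

section

variable {V ι : Type*}

theorem SimpleGraph.IsIndepSet.card_le_of_isClique_cover {G : SimpleGraph V} {S : Finset V}
    (hS : G.IsIndepSet (S : Set V)) {P : Finset (Finset V)} (hcov : ∀ v, ∃ C ∈ P, v ∈ C)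
    (hclq : ∀ C ∈ P, G.IsClique (C : Set V)) : #S ≤ #P :=
  card_le_card_of_forall_subsingleton (· ∈ ·) (fun v _ => hcov v)
    fun C hC _ ⟨huS, huC⟩ _ ⟨hvS, hvC⟩ =>
      by_contra fun huv => hS huS hvS huv (hclq C hC huC hvC huv)

theorem card_le_card_of_forall_exists_mem {P : Finset (Finset V)}
    (hP : (P : Set (Finset V)).PairwiseDisjoint id) {S : Finset V}
    (hS : ∀ C ∈ P, ∃ v ∈ S, v ∈ C) : #P ≤ #S :=
  card_le_card_of_forall_subsingleton (fun C v => v ∈ C) hS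
    fun v _ _ ⟨hC, hvC⟩ _ ⟨hC', hvC'⟩ => hP.elim_finset hC hC' v hvC hvC'

section CompleteMultipartite

variable {G : SimpleGraph V} {p : V → ι}

theorem injOn_of_isClique (hG : ∀ u v, G.Adj u v ↔ p u ≠ p v) {s : Set V}
    (hs : G.IsClique s) : s.InjOn p :=
  fun u hu v hv huv => by_contra fun h => (hG u v).1 (hs hu hv h) huv

theorem isIndepSet_fiber (hG : ∀ u v, G.Adj u v ↔ p u ≠ p v) [Fintype V] [DecidableEq ι]
    (i : ι) : G.IsIndepSet ({v | p v = i} : Finset V) := by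
  intro u hu v hv _ huv
  simp only [coe_filter, mem_univ, true_and] at hu hv
  exact (hG u v).1 huv (hu.trans hv.symm)

theorem exists_isNClique_of_le_card_image [DecidableEq V] [DecidableEq ι]
    (hG : ∀ u v, G.Adj u v ↔ p u ≠ p v) {s : Finset V} {n : ℕ} (hn : n ≤ #(s.image p)) :
    ∃ t ⊆ s, G.IsNClique n t := by
  obtain ⟨T, hTs, rfl⟩ := exists_subset_card_eq hn
  have hsurj : Set.SurjOn p s T := fun i hi => by simpa using hTs hi
  obtain ⟨t, hts, hinj, rfl⟩ := exists_subset_injOn_image_eq_of_surjOn _ _ hsurj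
  refine ⟨t, coe_subset.1 hts, fun u hu v hv huv => (hG u v).2 (hinj.ne hu hv huv), ?_⟩
  exact (card_image_of_injOn hinj).symm

end CompleteMultipartite

section UnionParts

variable [DecidableEq V] {P : Finset (Finset V)}

def unionPartsOfCardLE (P : Finset (Finset V)) (l : ℕ) : Finset V :=
  {C ∈ P | #C ≤ l}.biUnion id

theorem mem_unionPartsOfCardLE {l : ℕ} {v : V} :
    v ∈ unionPartsOfCardLE P l ↔ ∃ C ∈ P, v ∈ C ∧ #C ≤ l := by
  simp only [unionPartsOfCardLE, mem_biUnion, mem_filter, id]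
  grind

theorem subset_unionPartsOfCardLE {C : Finset V} {l : ℕ} (hC : C ∈ P) (hl : #C ≤ l) :
    C ⊆ unionPartsOfCardLE P l :=
  fun _ hv => mem_unionPartsOfCardLE.2 ⟨C, hC, hv, hl⟩

theorem unionPartsOfCardLE_mono : Monotone (unionPartsOfCardLE P) :=
  fun _ _ hll _ hv =>
    let ⟨C, hC, hvC, hl⟩ := mem_unionPartsOfCardLE.1 hv
    mem_unionPartsOfCardLE.2 ⟨C, hC, hvC, hl.trans hll⟩

end UnionParts

namespace IsGreedyPartition

variable [Fintype V] [DecidableEq V] {G : SimpleGraph V} {P : Finset (Finset V)}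

theorem nonempty (hP : IsGreedyPartition G P) {C : Finset V} (hC : C ∈ P) : C.Nonempty :=
  hP.1 C hC

theorem isClique (hP : IsGreedyPartition G P) {C : Finset V} (hC : C ∈ P) :
    G.IsClique (C : Set V) :=
  hP.2.1 C hC

theorem exists_mem (hP : IsGreedyPartition G P) (v : V) : ∃ C ∈ P, v ∈ C :=
  (hP.2.2.1 v).exists

theorem pairwiseDisjoint (hP : IsGreedyPartition G P) :
    (P : Set (Finset V)).PairwiseDisjoint id := by
  intro C hC C' hC' hne
  refine disjoint_left.2 fun v hv hv' => hne ?_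
  exact (hP.2.2.1 v).unique ⟨hC, hv⟩ ⟨hC', hv'⟩

theorem not_isNClique {l : ℕ} (hP : IsGreedyPartition G P) (hl : 1 ≤ l) {t : Finset V}
    (ht : t ⊆ unionPartsOfCardLE P l) : ¬G.IsNClique (l + 1) t :=
  hP.2.2.2 l hl t fun _ hv => mem_unionPartsOfCardLE.1 (ht hv)

end IsGreedyPartition

section GreedyCompleteMultipartite

variable [Fintype V] [DecidableEq V] [DecidableEq ι] {G : SimpleGraph V} {p : V → ι}
  {P : Finset (Finset V)}

theorem card_image_unionPartsOfCardLE_le (hG : ∀ u v, G.Adj u v ↔ p u ≠ p v)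
    (hP : IsGreedyPartition G P) {l : ℕ} (hl : 1 ≤ l) :
    #((unionPartsOfCardLE P l).image p) ≤ l := by
  by_contra! h
  obtain ⟨t, ht, hclique⟩ := exists_isNClique_of_le_card_image hG h
  exact hP.not_isNClique hl ht hclique

theorem image_eq_image_unionPartsOfCardLE (hG : ∀ u v, G.Adj u v ↔ p u ≠ p v)
    (hP : IsGreedyPartition G P) {C : Finset V} (hC : C ∈ P) :
    C.image p = (unionPartsOfCardLE P #C).image p := by
  refine eq_of_subset_of_card_le (image_subset_image (subset_unionPartsOfCardLE hC le_rfl)) ?_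
  rw [card_image_of_injOn (injOn_of_isClique hG (hP.isClique hC))]
  exact card_image_unionPartsOfCardLE_le hG hP (card_pos.2 (hP.nonempty hC))

theorem image_subset_image_of_card_le (hG : ∀ u v, G.Adj u v ↔ p u ≠ p v)
    (hP : IsGreedyPartition G P) {C C' : Finset V} (hC : C ∈ P) (hC' : C' ∈ P)
    (hCC' : #C ≤ #C') : C.image p ⊆ C'.image p := by
  rw [image_eq_image_unionPartsOfCardLE hG hP hC, image_eq_image_unionPartsOfCardLE hG hP hC']
  exact image_subset_image (unionPartsOfCardLE_mono hCC')

theorem exists_fiber_meets_all_parts (hG : ∀ u v, G.Adj u v ↔ p u ≠ p v)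
    (hP : IsGreedyPartition G P) (hne : P.Nonempty) : ∃ i, ∀ C ∈ P, ∃ v ∈ C, p v = i := by
  obtain ⟨C₀, hC₀, hmin⟩ := P.exists_min_image card hne
  obtain ⟨v₀, hv₀⟩ := hP.nonempty hC₀
  exact ⟨p v₀, fun C hC => mem_image.1 <|
    image_subset_image_of_card_le hG hP hC₀ hC (hmin C hC) (mem_image_of_mem p hv₀)⟩

end GreedyCompleteMultipartite

end

/-- If `G` is complete multipartite, with parts given as the fibers
of a map `p` (vertices are adjacent iff they lie in different fibers), then
every greedy partition of `G` has the same size, namely the size of the largest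
part of `G`. -/
theorem greedy_partition_size_of_complete_multipartite
    {V ι : Type*} [Fintype V] [DecidableEq V] [Fintype ι] [DecidableEq ι]
    (G : SimpleGraph V) (p : V → ι)
    (hG : ∀ u v, G.Adj u v ↔ p u ≠ p v)
    (P : Finset (Finset V)) (hP : IsGreedyPartition G P) :
    P.card = Finset.univ.sup
      (fun i => (Finset.univ.filter (fun v => p v = i)).card) := by
  refine le_antisymm ?_ (Finset.sup_le fun i _ => ?_)
  · obtain rfl | hne := P.eq_empty_or_nonempty
    · simp
    obtain ⟨i, hi⟩ := exists_fiber_meets_all_parts hG hP hne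
    refine (card_le_card_of_forall_exists_mem hP.pairwiseDisjoint fun C hC => ?_).trans
      (le_sup (f := fun i => #{v | p v = i}) (mem_univ i))
    obtain ⟨v, hvC, hv⟩ := hi C hC
    exact ⟨v, mem_filter.2 ⟨mem_univ v, hv⟩, hvC⟩
  · exact (isIndepSet_fiber hG i).card_le_of_isClique_cover
      hP.exists_mem fun _ => hP.isClique
end

section
/- Let G be a complete l-partite graph on n vertices with e edges and t triangles, and let r be the size of its largest part. Then r·(e − r·(n − r)) − t = −Σ_{i<j<m<l} c_i·c_j·c_m ≤ 0, where c₁ ≤ c₂ ≤ … ≤ c_l = r are the part sizes; in particular t ≥ r·(e − r·(n − r)). -/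
open Finset

lemma sum_powersetCard_three {N : ℕ} (f : Fin N → ℤ) :
    ∑ T ∈ Finset.powersetCard 3 (Finset.univ : Finset (Fin N)), ∏ i ∈ T, f i =
    ∑ i : Fin N, ∑ j : Fin N, ∑ m : Fin N,
      if i < j ∧ j < m then f i * f j * f m else 0 := by
  classical
  have key : ∑ x ∈ (Finset.univ : Finset (Fin N × Fin N × Fin N)).filter
        (fun x => x.1 < x.2.1 ∧ x.2.1 < x.2.2), f x.1 * f x.2.1 * f x.2.2 =
      ∑ T ∈ Finset.powersetCard 3 (Finset.univ : Finset (Fin N)), ∏ i ∈ T, f i := by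
    refine Finset.sum_bij (fun x _ => ({x.1, x.2.1, x.2.2} : Finset (Fin N))) ?_ ?_ ?_ ?_
    · intro x hx
      simp only [mem_filter, mem_univ, true_and] at hx
      rw [Finset.mem_powersetCard_univ]
      exact Finset.card_eq_three.mpr ⟨x.1, x.2.1, x.2.2, ne_of_lt hx.1,
        ne_of_lt (hx.1.trans hx.2), ne_of_lt hx.2, rfl⟩
    · intro a ha b hb hab
      simp only [mem_filter, mem_univ, true_and] at ha hb
      have h := Finset.ext_iff.mp hab
      simp only [Finset.mem_insert, Finset.mem_singleton] at h
      have h1 := (h a.1).mp (Or.inl rfl)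
      have h2 := (h a.2.1).mp (Or.inr (Or.inl rfl))
      have h3 := (h a.2.2).mp (Or.inr (Or.inr rfl))
      obtain ⟨a1, a2, a3⟩ := a
      obtain ⟨b1, b2, b3⟩ := b
      simp only [Fin.ext_iff, Fin.lt_def] at *
      simp only [Prod.mk.injEq, Fin.ext_iff]
      omega
    · intro T hT
      rw [Finset.mem_powersetCard_univ, Finset.card_eq_three] at hT
      obtain ⟨a, b, c, hab, hac, hbc, rfl⟩ := hT
      have sol : ∀ x y z : Fin N, x < y → y < z →
          ({x, y, z} : Finset (Fin N)) = {a, b, c} →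
          ∃ w, ∃ hw : w ∈ (Finset.univ : Finset (Fin N × Fin N × Fin N)).filter
            (fun x => x.1 < x.2.1 ∧ x.2.1 < x.2.2),
            ({w.1, w.2.1, w.2.2} : Finset (Fin N)) = {a, b, c} := by
        intro x y z h1 h2 h3
        exact ⟨(x, y, z), by simp [h1, h2], h3⟩
      rcases hab.lt_or_gt with h1 | h1 <;> rcases hac.lt_or_gt with h2 | h2 <;>
        rcases hbc.lt_or_gt with h3 | h3
      · exact sol a b c h1 h3 rfl
      · exact sol a c b h2 h3 (by ext w; simp; tauto)
      · exact absurd (h2.trans (h1.trans h3)) (lt_irrefl _)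
      · exact sol c a b h2 h1 (by ext w; simp; tauto)
      · exact sol b a c h1 h2 (by ext w; simp; tauto)
      · exact absurd (h2.trans (h3.trans h1)) (lt_irrefl _)
      · exact sol b c a h3 h2 (by ext w; simp; tauto)
      · exact sol c b a h3 h1 (by ext w; simp; tauto)
    · intro x hx
      simp only [mem_filter, mem_univ, true_and] at hx
      rw [Finset.prod_insert (by simp [ne_of_lt hx.1, ne_of_lt (hx.1.trans hx.2)]),
        Finset.prod_insert (by simp [ne_of_lt hx.2]), Finset.prod_singleton, mul_assoc]
  rw [← key, Finset.sum_filter, Fintype.sum_prod_type]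
  refine Finset.sum_congr rfl fun i _ => ?_
  rw [Fintype.sum_prod_type]


lemma clique3_count {V : Type*} [Fintype V] [DecidableEq V]
    (G : SimpleGraph V) [DecidableRel G.Adj]
    (L : ℕ) (p : V → Fin (L + 1)) (hG : ∀ u v, G.Adj u v ↔ p u ≠ p v)
    (c : Fin (L + 1) → ℕ)
    (hc : ∀ i, c i = (Finset.univ.filter (fun v => p v = i)).card) :
    (G.cliqueFinset 3).card =
      ∑ T ∈ Finset.powersetCard 3 (Finset.univ : Finset (Fin (L + 1))),
        ∏ i ∈ T, c i := by
  classical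
  have hinj : ∀ S : Finset V, G.IsNClique 3 S → Set.InjOn p S := by
    intro S hS u hu v hv huv
    by_contra hne
    exact (hG u v).mp (hS.1 hu hv hne) huv
  have hmaps : ∀ S ∈ G.cliqueFinset 3,
      S.image p ∈ Finset.powersetCard 3 (Finset.univ : Finset (Fin (L + 1))) := by
    intro S hS
    rw [SimpleGraph.mem_cliqueFinset_iff] at hS
    rw [Finset.mem_powersetCard_univ, Finset.card_image_of_injOn (hinj S hS)]
    exact hS.2
  rw [Finset.card_eq_sum_card_fiberwise hmaps]
  refine Finset.sum_congr rfl fun T hT => ?_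
  have hpi : ∏ i ∈ T, c i =
      (T.pi (fun i => Finset.univ.filter (fun v => p v = i))).card := by
    rw [Finset.card_pi]
    exact Finset.prod_congr rfl fun i _ => hc i
  rw [hpi]
  have exu : ∀ S ∈ (G.cliqueFinset 3).filter (fun S => S.image p = T),
      ∀ i ∈ T, ∃! v, v ∈ S ∧ p v = i := by
    intro S hS i hi
    simp only [Finset.mem_filter, SimpleGraph.mem_cliqueFinset_iff] at hS
    obtain ⟨hclique, himg⟩ := hS
    rw [← himg] at hi
    obtain ⟨v, hv, hpv⟩ := Finset.mem_image.mp hi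
    refine ⟨v, ⟨hv, hpv⟩, ?_⟩
    rintro w ⟨hw, hpw⟩
    exact hinj S hclique hw hv (hpw.trans hpv.symm)
  have huniq : ∀ (S : Finset V) (hS : S ∈ (G.cliqueFinset 3).filter
        (fun S => S.image p = T)) (i : Fin (L + 1)) (hi : i ∈ T) (v : V),
      v ∈ S → p v = i →
      Finset.choose (fun v => p v = i) S (exu S hS i hi) = v := by
    intro S hS i hi v hv hpv
    exact (exu S hS i hi).unique
      ⟨Finset.choose_mem (fun v => p v = i) S (exu S hS i hi),
       Finset.choose_property (fun v => p v = i) S (exu S hS i hi)⟩ ⟨hv, hpv⟩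
  have hback : ∀ f ∈ T.pi (fun i => Finset.univ.filter (fun v => p v = i)),
      T.attach.image (fun x => f x.1 x.2) ∈
        (G.cliqueFinset 3).filter (fun S => S.image p = T) := by
    intro f hf
    rw [Finset.mem_pi] at hf
    have hval : ∀ (i : Fin (L + 1)) (hi : i ∈ T), p (f i hi) = i := by
      intro i hi
      have := hf i hi
      simpa using this
    have hinj2 : ∀ (x y : {a // a ∈ T}), f x.1 x.2 = f y.1 y.2 → x = y := by
      intro x y hxy
      have : p (f x.1 x.2) = p (f y.1 y.2) := by rw [hxy]
      rw [hval, hval] at this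
      exact Subtype.ext this
    have hcardT : T.card = 3 := Finset.mem_powersetCard_univ.mp hT
    simp only [Finset.mem_filter, SimpleGraph.mem_cliqueFinset_iff]
    refine ⟨⟨?_, ?_⟩, ?_⟩
    · intro u hu v hv huv
      simp only [Finset.coe_image, Set.mem_image, Finset.mem_coe] at hu hv
      obtain ⟨a, _, rfl⟩ := hu
      obtain ⟨b, _, rfl⟩ := hv
      rw [hG]
      intro hpe
      rw [hval, hval] at hpe
      exact huv (by rw [Subtype.ext hpe])
    · rw [Finset.card_image_of_injOn (fun x _ y _ h => hinj2 x y h),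
        Finset.card_attach, hcardT]
    · ext i
      simp only [Finset.mem_image, Finset.mem_attach, true_and]
      constructor
      · rintro ⟨v, ⟨x, rfl⟩, rfl⟩
        rw [hval]
        exact x.2
      · intro hi
        exact ⟨f i hi, ⟨⟨i, hi⟩, rfl⟩, hval i hi⟩
  refine Finset.card_bij'
    (fun S hS => fun i hi => Finset.choose (fun v => p v = i) S (exu S hS i hi))
    (fun f _ => T.attach.image (fun x => f x.1 x.2)) ?_ hback ?_ ?_
  · -- forward maps into pi
    intro S hS
    rw [Finset.mem_pi]
    intro i hi
    simp only [Finset.mem_filter, Finset.mem_univ, true_and]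
    exact Finset.choose_property (fun v => p v = i) S (exu S hS i hi)
  · -- left inverse
    intro S hS
    have hS' := hS
    simp only [Finset.mem_filter, SimpleGraph.mem_cliqueFinset_iff] at hS'
    obtain ⟨hclique, himg⟩ := hS'
    apply Finset.eq_of_subset_of_card_le
    · intro v hv
      simp only [Finset.mem_image, Finset.mem_attach, true_and] at hv
      obtain ⟨x, rfl⟩ := hv
      exact Finset.choose_mem (fun v => p v = x.1) S (exu S hS x.1 x.2)
    · have hi3 : ∀ (x y : {a // a ∈ T}),
          Finset.choose (fun v => p v = x.1) S (exu S hS x.1 x.2) =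
          Finset.choose (fun v => p v = y.1) S (exu S hS y.1 y.2) → x = y := by
        intro x y h
        have hx := Finset.choose_property (fun v => p v = x.1) S (exu S hS x.1 x.2)
        have hy := Finset.choose_property (fun v => p v = y.1) S (exu S hS y.1 y.2)
        rw [h, hy] at hx
        exact Subtype.ext hx.symm
      rw [Finset.card_image_of_injOn (fun x _ y _ h => hi3 x y h),
        Finset.card_attach, Finset.mem_powersetCard_univ.mp hT, hclique.2]
  · -- right inverse
    intro f hf
    funext i hi
    refine huniq _ (hback f hf) i hi (f i hi)
      (Finset.mem_image.mpr ⟨⟨i, hi⟩, Finset.mem_attach _ _, rfl⟩) ?_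
    rw [Finset.mem_pi] at hf
    have := hf i hi
    simpa using this


/-- Let `G` be a complete `l`-partite graph (here `l = L + 1`,
with parts the fibers of `p`, of sizes `c 0 ≤ c 1 ≤ … ≤ c (Fin.last L) = r`)
on `n` vertices with `e` edges and `t` triangles. Then
`r·(e − r·(n − r)) − t = −Σ_{i<j<m<last} c i · c j · c m ≤ 0`;
in particular `t ≥ r·(e − r·(n − r))`. -/
theorem g_of_complete_multipartite
    {V : Type*} [Fintype V] [DecidableEq V]
    (G : SimpleGraph V) [DecidableRel G.Adj]
    (L : ℕ) (p : V → Fin (L + 1))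
    (hG : ∀ u v, G.Adj u v ↔ p u ≠ p v)
    (c : Fin (L + 1) → ℕ)
    (hc : ∀ i, c i = (Finset.univ.filter (fun v => p v = i)).card)
    (hmono : Monotone c)
    (n e t r : ℕ)
    (hn : n = Fintype.card V)
    (he : e = G.edgeFinset.card)
    (ht : t = (G.cliqueFinset 3).card)
    (hr : r = c (Fin.last L)) :
    (r : ℤ) * ((e : ℤ) - r * ((n : ℤ) - r)) - t =
      -(∑ i : Fin (L + 1), ∑ j : Fin (L + 1), ∑ m : Fin (L + 1),
        if i < j ∧ j < m ∧ m < Fin.last L then (c i : ℤ) * c j * c m else 0) ∧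
    (r : ℤ) * ((e : ℤ) - r * ((n : ℤ) - r)) ≤ t := by
  classical
  set f : Fin (L + 1) → ℤ := fun i => (c i : ℤ) with hf
  set B : ℤ := ∑ i : Fin (L + 1), ∑ j : Fin (L + 1), ∑ m : Fin (L + 1),
      if i < j ∧ j < m ∧ m < Fin.last L then (c i : ℤ) * c j * c m else 0 with hB
  set A : ℤ := ∑ i : Fin (L + 1), ∑ j : Fin (L + 1),
      if i < j ∧ j < Fin.last L then f i * f j else 0 with hA
  set S : ℤ := ∑ i : Fin (L + 1), if i < Fin.last L then f i else 0 with hS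
  have hflast : f (Fin.last L) = (r : ℤ) := by rw [hf, hr]
  -- vertex count
  have hn0 : n = ∑ i, c i := by
    rw [hn, ← Finset.card_univ,
      Finset.card_eq_sum_card_fiberwise (f := p) (t := Finset.univ)
        (fun x _ => Finset.mem_univ _)]
    exact Finset.sum_congr rfl fun i _ => (hc i).symm
  have hnZ : (n : ℤ) = ∑ i, f i := by rw [hn0]; push_cast; rfl
  have hnS : (n : ℤ) = S + (r : ℤ) := by
    rw [hnZ, hS]
    have cutn : ∀ i : Fin (L + 1), f i =
        (if i < Fin.last L then f i else 0) + (if i = Fin.last L then f i else 0) := by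
      intro i
      rcases eq_or_lt_of_le (Fin.le_last i) with h | h
      · simp [h]
      · simp [h, ne_of_lt h]
    rw [Finset.sum_congr rfl fun i _ => cutn i, Finset.sum_add_distrib]
    congr 1
    rw [Finset.sum_eq_single (Fin.last L) (fun b _ hb => if_neg hb)
      (fun h => absurd (Finset.mem_univ _) h), if_pos rfl, hflast]
  -- edge count
  have hdeg : ∀ v : V, G.degree v + c (p v) = n := by
    intro v
    have hfe : Finset.univ.filter (fun u => G.Adj v u) =
        Finset.univ.filter (fun u => ¬ (p u = p v)) := by
      ext u
      simp [hG, ne_comm, eq_comm]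
    have hpart := Finset.card_filter_add_card_filter_not
      (s := (Finset.univ : Finset V)) (p := fun u => p u = p v)
    have hdv : G.degree v = (Finset.univ.filter (fun u => ¬ (p u = p v))).card := by
      rw [SimpleGraph.degree, SimpleGraph.neighborFinset_eq_filter, hfe]
    rw [hdv, ← hc (p v), hn, ← Finset.card_univ] at *
    omega
  have hfib : ∑ v : V, c (p v) = ∑ i, c i * c i := by
    rw [← Finset.sum_fiberwise Finset.univ p (fun v => c (p v))]
    refine Finset.sum_congr rfl fun i _ => ?_
    calc ∑ v ∈ Finset.univ.filter (fun v => p v = i), c (p v)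
        = ∑ v ∈ Finset.univ.filter (fun v => p v = i), c i :=
          Finset.sum_congr rfl fun v hv => by rw [(Finset.mem_filter.mp hv).2]
      _ = (Finset.univ.filter (fun v => p v = i)).card * c i := by
          rw [Finset.sum_const, smul_eq_mul]
      _ = c i * c i := by rw [← hc]
  have hE0 : 2 * e + ∑ i, c i * c i = n * n := by
    have hhs := SimpleGraph.sum_degrees_eq_twice_card_edges G
    have h2 : ∑ v : V, (G.degree v + c (p v)) = ∑ v : V, n :=
      Finset.sum_congr rfl fun v _ => hdeg v
    rw [Finset.sum_add_distrib, hhs, hfib, Finset.sum_const, Finset.card_univ, ← hn,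
      smul_eq_mul] at h2
    rw [← he] at h2
    exact h2
  have hEZ : 2 * (e : ℤ) + ∑ i, f i * f i = (n : ℤ) * n := by
    have := congrArg (Nat.cast : ℕ → ℤ) hE0
    push_cast at this
    convert this using 2
  have hsq : (n : ℤ) * n = ∑ i : Fin (L + 1), ∑ j : Fin (L + 1), f i * f j := by
    rw [hnZ, Finset.sum_mul_sum]
  have tri : ∀ i j : Fin (L + 1), f i * f j =
      (if i < j then f i * f j else 0) + (if i = j then f i * f j else 0) +
        (if j < i then f i * f j else 0) := by
    intro i j
    rcases lt_trichotomy i j with h | h | h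
    · rw [if_pos h, if_neg h.ne, if_neg (asymm h), add_zero, add_zero]
    · subst h
      simp
    · rw [if_neg (asymm h), if_neg (ne_of_gt h), if_pos h, zero_add, zero_add]
  have hA2 : (e : ℤ) = ∑ i : Fin (L + 1), ∑ j : Fin (L + 1),
      if i < j then f i * f j else 0 := by
    have hdiag : ∑ i : Fin (L + 1), ∑ j : Fin (L + 1),
        (if i = j then f i * f j else 0) = ∑ i, f i * f i := by
      refine Finset.sum_congr rfl fun i _ => ?_
      rw [Finset.sum_ite_eq Finset.univ i (fun j => f i * f j), if_pos (Finset.mem_univ i)]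
    have hlow : ∑ i : Fin (L + 1), ∑ j : Fin (L + 1),
        (if j < i then f i * f j else 0) = ∑ i : Fin (L + 1), ∑ j : Fin (L + 1),
        (if i < j then f i * f j else 0) := by
      rw [Finset.sum_comm]
      exact Finset.sum_congr rfl fun i _ => Finset.sum_congr rfl fun j _ => by
        rw [mul_comm]
    have key : ∑ i : Fin (L + 1), ∑ j : Fin (L + 1), f i * f j =
        (∑ i : Fin (L + 1), ∑ j : Fin (L + 1), (if i < j then f i * f j else 0)) +
        (∑ i, f i * f i) +
        (∑ i : Fin (L + 1), ∑ j : Fin (L + 1), (if j < i then f i * f j else 0)) := by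
      calc ∑ i : Fin (L + 1), ∑ j : Fin (L + 1), f i * f j
          = ∑ i : Fin (L + 1), ∑ j : Fin (L + 1),
            ((if i < j then f i * f j else 0) + (if i = j then f i * f j else 0) +
              (if j < i then f i * f j else 0)) :=
            Finset.sum_congr rfl fun i _ => Finset.sum_congr rfl fun j _ => tri i j
        _ = ∑ i : Fin (L + 1),
            ((∑ j : Fin (L + 1), (if i < j then f i * f j else 0)) +
             (∑ j : Fin (L + 1), (if i = j then f i * f j else 0)) +
             (∑ j : Fin (L + 1), (if j < i then f i * f j else 0))) :=
            Finset.sum_congr rfl fun i _ => by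
              rw [Finset.sum_add_distrib, Finset.sum_add_distrib]
        _ = _ := by
            rw [Finset.sum_add_distrib, Finset.sum_add_distrib, hdiag]
    rw [hlow] at key
    rw [hsq, key] at hEZ
    linarith
  have heA : (e : ℤ) = A + S * r := by
    rw [hA2, hA, hS]
    have cut2 : ∀ (i j : Fin (L + 1)),
        (if i < j then f i * f j else 0) =
        (if i < j ∧ j < Fin.last L then f i * f j else 0) +
        (if i < j ∧ j = Fin.last L then f i * f j else 0) := by
      intro i j
      rcases eq_or_lt_of_le (Fin.le_last j) with h | h
      · rw [h]
        by_cases hi : i < Fin.last L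
        · rw [if_pos hi, if_neg (fun hc' => lt_irrefl _ hc'.2), if_pos ⟨hi, rfl⟩, zero_add]
        · rw [if_neg hi, if_neg (fun hc' => hi hc'.1), if_neg (fun hc' => hi hc'.1), add_zero]
      · have hne : ¬ j = Fin.last L := ne_of_lt h
        by_cases hij : i < j
        · rw [if_pos hij, if_pos ⟨hij, h⟩, if_neg (fun hc' => hne hc'.2), add_zero]
        · rw [if_neg hij, if_neg (fun hc' => hij hc'.1), if_neg (fun hc' => hij hc'.1), add_zero]
    rw [Finset.sum_congr rfl fun i _ =>
      (Finset.sum_congr rfl fun j _ => cut2 i j).trans Finset.sum_add_distrib,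
      Finset.sum_add_distrib]
    congr 1
    rw [Finset.sum_mul]
    refine Finset.sum_congr rfl fun i _ => ?_
    rw [Finset.sum_eq_single (Fin.last L)
      (fun b _ hb => if_neg (fun hcon => hb hcon.2))
      (fun h => absurd (Finset.mem_univ _) h)]
    rw [ite_mul, zero_mul]
    by_cases hi : i < Fin.last L
    · rw [if_pos ⟨hi, rfl⟩, if_pos hi, hflast]
    · rw [if_neg (fun hcon => hi hcon.1), if_neg hi]
  -- triangle count
  have hT0 : (t : ℤ) = ∑ i : Fin (L + 1), ∑ j : Fin (L + 1), ∑ m : Fin (L + 1),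
      if i < j ∧ j < m then f i * f j * f m else 0 := by
    rw [← sum_powersetCard_three f, ht, clique3_count G L p hG c hc]
    push_cast
    rfl
  have htB : (t : ℤ) = B + A * r := by
    rw [hT0, hB, hA]
    have cut3 : ∀ (i j m : Fin (L + 1)),
        (if i < j ∧ j < m then f i * f j * f m else 0) =
        (if i < j ∧ j < m ∧ m < Fin.last L then (c i : ℤ) * c j * c m else 0) +
        (if (i < j ∧ j < Fin.last L) ∧ m = Fin.last L then f i * f j * f m else 0) := by
      intro i j m
      rcases eq_or_lt_of_le (Fin.le_last m) with h | h
      · rw [h]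
        by_cases hij : i < j ∧ j < Fin.last L
        · rw [if_pos hij, if_neg (fun hc' => lt_irrefl _ hc'.2.2), if_pos ⟨hij, rfl⟩,
            zero_add]
        · rw [if_neg hij, if_neg (fun hc' => lt_irrefl _ hc'.2.2),
            if_neg (fun hc' => hij hc'.1), zero_add]
      · have hne : ¬ m = Fin.last L := ne_of_lt h
        by_cases hij : i < j ∧ j < m
        · rw [if_pos hij, if_pos ⟨hij.1, hij.2, h⟩, if_neg (fun hc' => hne hc'.2), add_zero]
        · rw [if_neg hij, if_neg (fun hc' => hij ⟨hc'.1, hc'.2.1⟩),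
            if_neg (fun hc' => hne hc'.2), add_zero]
    rw [Finset.sum_congr rfl fun i _ => (Finset.sum_congr rfl fun j _ =>
        (Finset.sum_congr rfl fun m _ => cut3 i j m).trans
          Finset.sum_add_distrib).trans Finset.sum_add_distrib,
      Finset.sum_add_distrib]
    congr 1
    rw [Finset.sum_mul]
    refine Finset.sum_congr rfl fun i _ => ?_
    rw [Finset.sum_mul]
    refine Finset.sum_congr rfl fun j _ => ?_
    rw [Finset.sum_eq_single (Fin.last L)
      (fun b _ hb => if_neg (fun hcon => hb hcon.2))
      (fun h => absurd (Finset.mem_univ _) h)]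
    rw [ite_mul, zero_mul]
    by_cases hij : i < j ∧ j < Fin.last L
    · rw [if_pos ⟨hij, rfl⟩, if_pos hij, hflast]
    · rw [if_neg (fun hcon => hij hcon.1), if_neg hij]
  have hBnn : 0 ≤ B := by
    rw [hB]
    refine Finset.sum_nonneg fun i _ => Finset.sum_nonneg fun j _ =>
      Finset.sum_nonneg fun m _ => ?_
    split
    · positivity
    · exact le_rfl
  constructor
  · rw [heA, hnS, htB]; ring
  · have h1 : (r : ℤ) * ((e : ℤ) - r * ((n : ℤ) - r)) - t = -B := by
      rw [heA, hnS, htB]; ring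
    linarith
end

section
/- Let G be a K₄-free simple graph on n vertices with e edges, let P be a greedy partition of G, let r be the size of P, and let r₂ be the number of parts of P of size at least 2. Then e ≤ r·(n − r) + r₂·(n − r − r₂). -/
open Finset

namespace GreedyAux

variable {V : Type*} [Fintype V] [DecidableEq V]

/-- Number of ordered adjacent pairs with first coordinate in `C`, second in `D`. -/
def EE (G : SimpleGraph V) [DecidableRel G.Adj] (C D : Finset V) : ℕ :=
  ∑ u ∈ C, (D.filter (G.Adj u)).card

/-- Weight on pairs of parts. -/
def ww (C D : Finset V) : ℕ :=
  (C.card - 1) + (D.card - 1)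
    + (if 2 ≤ C.card ∧ D.card = 3 then 1 else 0)
    + (if 2 ≤ D.card ∧ C.card = 3 then 1 else 0)

lemma ww_comm (C D : Finset V) : ww C D = ww D C := by
  unfold ww; split_ifs <;> omega

variable {G : SimpleGraph V} [DecidableRel G.Adj] {P : Finset (Finset V)}

lemma EE_comm (C D : Finset V) : EE G C D = EE G D C := by
  unfold EE
  simp_rw [Finset.card_filter]
  rw [Finset.sum_comm]
  exact Finset.sum_congr rfl fun v _ => Finset.sum_congr rfl fun u _ =>
    if_congr (G.adj_comm u v) rfl rfl

lemma parts_disjoint (hP : IsGreedyPartition G P) :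
    Set.PairwiseDisjoint (↑P) (id : Finset V → Finset V) := by
  intro C hC D hD hne
  rw [Function.onFun]
  rw [Finset.disjoint_left]
  intro v hvC hvD
  obtain ⟨U, _, hUuniq⟩ := hP.2.2.1 v
  exact hne ((hUuniq C ⟨hC, hvC⟩).trans (hUuniq D ⟨hD, hvD⟩).symm)

lemma parts_cover (hP : IsGreedyPartition G P) :
    (Finset.univ : Finset V) = P.biUnion id := by
  ext v
  simp only [mem_univ, mem_biUnion, id, true_iff]
  obtain ⟨C, ⟨hC, hvC⟩, _⟩ := hP.2.2.1 v
  exact ⟨C, hC, hvC⟩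

lemma sum_parts (hP : IsGreedyPartition G P) (f : V → ℕ) :
    ∑ C ∈ P, ∑ u ∈ C, f u = ∑ u, f u := by
  rw [parts_cover hP, Finset.sum_biUnion (parts_disjoint hP)]
  rfl

lemma card_le_three (hK4 : G.CliqueFree 4) (hP : IsGreedyPartition G P)
    {C : Finset V} (hC : C ∈ P) : C.card ≤ 3 := by
  by_contra h
  push_neg at h
  obtain ⟨t, ht, htc⟩ := Finset.exists_subset_card_eq (show 4 ≤ C.card by omega)
  exact hK4 t ⟨(hP.2.1 C hC).subset (Finset.coe_subset.mpr ht), htc⟩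

lemma nbrs_in_triangle (hK4 : G.CliqueFree 4) {C : Finset V}
    (hCc : G.IsClique (C : Set V)) (h3 : C.card = 3) {v : V} (hv : v ∉ C) :
    (C.filter (G.Adj v)).card ≤ 2 := by
  by_contra h
  push_neg at h
  have heq : C.filter (G.Adj v) = C :=
    Finset.eq_of_subset_of_card_le (Finset.filter_subset _ _) (by omega)
  refine hK4 (insert v C) ⟨?_, by rw [Finset.card_insert_of_notMem hv, h3]⟩
  rw [Finset.coe_insert]
  refine hCc.insert fun u hu _ => ?_
  have hu' : u ∈ C := hu
  exact (Finset.mem_filter.mp (heq.symm ▸ hu')).2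

lemma no_small_triangle (hP : IsGreedyPartition G P) {u v w : V}
    (hu : ∃ C ∈ P, u ∈ C ∧ C.card ≤ 2) (hv : ∃ C ∈ P, v ∈ C ∧ C.card ≤ 2)
    (hw : ∃ C ∈ P, w ∈ C ∧ C.card ≤ 2)
    (huv : G.Adj u v) (huw : G.Adj u w) (hvw : G.Adj v w) : False := by
  refine hP.2.2.2 2 (by norm_num) {u, v, w} ?_ ?_
  · intro x hx
    simp only [mem_insert, mem_singleton] at hx
    rcases hx with rfl | rfl | rfl
    · exact hu
    · exact hv
    · exact hw
  · exact SimpleGraph.is3Clique_triple_iff.mpr ⟨huv, huw, hvw⟩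

lemma no_small_edge (hP : IsGreedyPartition G P) {u v : V}
    (hu : ∃ C ∈ P, u ∈ C ∧ C.card ≤ 1) (hv : ∃ C ∈ P, v ∈ C ∧ C.card ≤ 1)
    (huv : G.Adj u v) : False := by
  refine hP.2.2.2 1 le_rfl {u, v} ?_ ?_
  · intro x hx
    simp only [mem_insert, mem_singleton] at hx
    rcases hx with rfl | rfl
    · exact hu
    · exact hv
  · constructor
    · rw [Finset.coe_insert, Finset.coe_singleton]
      intro x hx y hy hne
      rcases hx with rfl | rfl <;> rcases hy with rfl | rfl
      · exact absurd rfl hne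
      · exact huv
      · exact huv.symm
      · exact absurd rfl hne
    · exact Finset.card_pair huv.ne

lemma nbrs_in_pair (hP : IsGreedyPartition G P) {D : Finset V} (hD : D ∈ P)
    (h2 : D.card = 2) {u : V} (hu : ∃ C ∈ P, u ∈ C ∧ C.card ≤ 2) (huD : u ∉ D) :
    (D.filter (G.Adj u)).card ≤ 1 := by
  by_contra h
  push_neg at h
  have heq : D.filter (G.Adj u) = D :=
    Finset.eq_of_subset_of_card_le (Finset.filter_subset _ _) (by omega)
  have hadj : ∀ x ∈ D, G.Adj u x := fun x hx =>
    (Finset.mem_filter.mp (heq.symm ▸ hx)).2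
  obtain ⟨v, w, hvw, rfl⟩ := Finset.card_eq_two.mp h2
  have hvwadj : G.Adj v w := hP.2.1 _ hD (by simp) (by simp) hvw
  exact no_small_triangle hP hu
    ⟨_, hD, by simp, by omega⟩ ⟨_, hD, by simp, by omega⟩
    (hadj v (by simp)) (hadj w (by simp)) hvwadj

lemma diag_bound (hK4 : G.CliqueFree 4) (hP : IsGreedyPartition G P)
    {C : Finset V} (hC : C ∈ P) : EE G C C ≤ ww C C := by
  have h1 : 1 ≤ C.card := Finset.card_pos.mpr (hP.1 C hC)
  have h3 : C.card ≤ 3 := card_le_three hK4 hP hC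
  have hb : ∀ u ∈ C, (C.filter (G.Adj u)).card ≤ C.card - 1 := by
    intro u hu
    have hsub : C.filter (G.Adj u) ⊆ C.erase u := by
      intro x hx
      rw [Finset.mem_erase]
      obtain ⟨hxC, hadj⟩ := Finset.mem_filter.mp hx
      exact ⟨hadj.ne', hxC⟩
    calc (C.filter (G.Adj u)).card ≤ (C.erase u).card := Finset.card_le_card hsub
      _ = C.card - 1 := Finset.card_erase_of_mem hu
  calc EE G C C ≤ ∑ _u ∈ C, (C.card - 1) := Finset.sum_le_sum hb
    _ = C.card * (C.card - 1) := by rw [Finset.sum_const, smul_eq_mul]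
    _ ≤ ww C C := by
        have hcases : C.card = 1 ∨ C.card = 2 ∨ C.card = 3 := by omega
        unfold ww
        rcases hcases with hc | hc | hc <;> simp [hc]

lemma pair_bound_aux (hK4 : G.CliqueFree 4) (hP : IsGreedyPartition G P)
    {C D : Finset V} (hC : C ∈ P) (hD : D ∈ P) (hne : C ≠ D)
    (hle : D.card ≤ C.card) : EE G C D ≤ ww C D := by
  have hdisj : Disjoint C D := parts_disjoint hP hC hD hne
  have hC1 : 1 ≤ C.card := Finset.card_pos.mpr (hP.1 C hC)
  have hD1 : 1 ≤ D.card := Finset.card_pos.mpr (hP.1 D hD)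
  have hC3 : C.card ≤ 3 := card_le_three hK4 hP hC
  have hD3 : D.card ≤ 3 := card_le_three hK4 hP hD
  have hcases : C.card = 1 ∨ C.card = 2 ∨ C.card = 3 := by omega
  rcases hcases with hc | hc | hc
  · -- C.card = 1, so D.card = 1
    have hd : D.card = 1 := by omega
    obtain ⟨x, rfl⟩ := Finset.card_eq_one.mp hc
    obtain ⟨y, rfl⟩ := Finset.card_eq_one.mp hd
    have hxy : ¬ G.Adj x y := fun hadj =>
      no_small_edge hP ⟨_, hC, by simp, by simp⟩ ⟨_, hD, by simp, by simp⟩ hadj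
    have : EE G {x} {y} = 0 := by
      unfold EE
      rw [Finset.sum_singleton, Finset.filter_singleton, if_neg hxy]
      simp
    omega
  · -- C.card = 2
    have hd : D.card = 1 ∨ D.card = 2 := by omega
    rcases hd with hd | hd
    · -- D.card = 1
      obtain ⟨v, rfl⟩ := Finset.card_eq_one.mp hd
      obtain ⟨x, y, hxy, rfl⟩ := Finset.card_eq_two.mp hc
      have hxyadj : G.Adj x y := hP.2.1 _ hC (by simp) (by simp) hxy
      have hnot : ¬ (G.Adj x v ∧ G.Adj y v) := by
        rintro ⟨h1, h2⟩
        exact no_small_triangle hP ⟨_, hD, by simp, by simp⟩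
          ⟨_, hC, by simp, by omega⟩ ⟨_, hC, by simp, by omega⟩
          h1.symm h2.symm hxyadj
      have hww : ww {x, y} {v} = 1 := by unfold ww; split_ifs <;> omega
      have hEE : EE G {x, y} {v} =
          (if G.Adj x v then 1 else 0) + (if G.Adj y v then 1 else 0) := by
        unfold EE
        rw [Finset.sum_pair hxy, Finset.filter_singleton, Finset.filter_singleton]
        split_ifs <;> simp
      rw [hEE, hww]
      by_cases h1 : G.Adj x v <;> by_cases h2 : G.Adj y v <;>
        simp [h1, h2] at hnot ⊢
    · -- D.card = 2
      have hb : ∀ u ∈ C, (D.filter (G.Adj u)).card ≤ 1 := fun u hu =>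
        nbrs_in_pair hP hD hd ⟨_, hC, hu, by omega⟩ (Finset.disjoint_left.mp hdisj hu)
      calc EE G C D ≤ ∑ _u ∈ C, 1 := Finset.sum_le_sum hb
        _ = C.card := by rw [Finset.sum_const, smul_eq_mul, mul_one]
        _ ≤ ww C D := by unfold ww; split_ifs <;> omega
  · -- C.card = 3
    rw [EE_comm]
    have hb : ∀ v ∈ D, (C.filter (G.Adj v)).card ≤ 2 := fun v hv =>
      nbrs_in_triangle hK4 (hP.2.1 C hC) hc (Finset.disjoint_right.mp hdisj hv)
    calc EE G D C ≤ ∑ _v ∈ D, 2 := Finset.sum_le_sum hb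
      _ = D.card * 2 := by rw [Finset.sum_const, smul_eq_mul]
      _ ≤ ww C D := by unfold ww; split_ifs <;> omega

lemma pair_bound (hK4 : G.CliqueFree 4) (hP : IsGreedyPartition G P)
    {C D : Finset V} (hC : C ∈ P) (hD : D ∈ P) : EE G C D ≤ ww C D := by
  rcases eq_or_ne C D with rfl | hne
  · exact diag_bound hK4 hP hC
  · rcases le_total D.card C.card with h | h
    · exact pair_bound_aux hK4 hP hC hD hne h
    · rw [EE_comm, ww_comm]
      exact pair_bound_aux hK4 hP hD hC hne.symm h

end GreedyAux

open GreedyAux in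
/-- If `G` is `K₄`-free on `n` vertices with `e` edges, `P` is a
greedy partition of `G` of size `r`, and `r₂` is the number of parts of `P` of
size at least `2`, then `e ≤ r·(n − r) + r₂·(n − r − r₂)`. -/
theorem edge_bound_of_greedy_partition_k4_free
    {V : Type*} [Fintype V] [DecidableEq V]
    (G : SimpleGraph V) [DecidableRel G.Adj]
    (hK4 : G.CliqueFree 4)
    (P : Finset (Finset V)) (hP : IsGreedyPartition G P)
    (n e r r₂ : ℕ)
    (hn : n = Fintype.card V)
    (he : e = G.edgeFinset.card)
    (hr : r = P.card)
    (hr₂ : r₂ = (P.filter (fun C => 2 ≤ C.card)).card) :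
    (e : ℤ) ≤ (r : ℤ) * ((n : ℤ) - r) + (r₂ : ℤ) * ((n : ℤ) - r - r₂) := by
  classical
  set K : ℕ := ∑ C ∈ P, (C.card - 1) with hK_def
  set T : ℕ := ∑ C ∈ P, (if C.card = 3 then 1 else 0) with hT_def
  set R2 : ℕ := ∑ C ∈ P, (if 2 ≤ C.card then 1 else 0) with hR2_def
  -- the number of vertices is the sum of the part sizes
  have hsum_card : ∑ C ∈ P, C.card = n := by
    rw [hn, ← Finset.card_univ, parts_cover hP,
      Finset.card_biUnion (fun x hx y hy hxy => parts_disjoint hP hx hy hxy)]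
    rfl
  -- double counting: 2e is the sum of EE over pairs of parts
  have h2e : 2 * e = ∑ C ∈ P, ∑ D ∈ P, EE G C D := by
    rw [he, ← SimpleGraph.sum_degrees_eq_twice_card_edges,
      ← sum_parts hP (fun u => G.degree u)]
    refine Finset.sum_congr rfl fun C _ => ?_
    have hdeg : ∀ u : V, G.degree u = ∑ D ∈ P, (D.filter (G.Adj u)).card := by
      intro u
      rw [← SimpleGraph.card_neighborFinset_eq_degree,
        SimpleGraph.neighborFinset_eq_filter, parts_cover hP,
        Finset.filter_biUnion, Finset.card_biUnion (fun x hx y hy hxy =>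
          Finset.disjoint_filter_filter (parts_disjoint hP hx hy hxy))]
      rfl
    calc ∑ u ∈ C, G.degree u = ∑ u ∈ C, ∑ D ∈ P, (D.filter (G.Adj u)).card :=
          Finset.sum_congr rfl fun u _ => hdeg u
      _ = ∑ D ∈ P, ∑ u ∈ C, (D.filter (G.Adj u)).card := Finset.sum_comm
      _ = ∑ D ∈ P, EE G C D := rfl
  -- the key bound
  have hmain : 2 * e ≤ ∑ C ∈ P, ∑ D ∈ P, ww C D := by
    rw [h2e]
    exact Finset.sum_le_sum fun C hC =>
      Finset.sum_le_sum fun D hD => pair_bound hK4 hP hC hD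
  -- evaluating the weight sum
  have hww : ∀ C D : Finset V, ww C D = (C.card - 1) + (D.card - 1)
      + (if 2 ≤ C.card then 1 else 0) * (if D.card = 3 then 1 else 0)
      + (if 2 ≤ D.card then 1 else 0) * (if C.card = 3 then 1 else 0) := by
    intro C D; unfold ww; split_ifs <;> omega
  have hwsum : ∑ C ∈ P, ∑ D ∈ P, ww C D = 2 * (r * K) + 2 * (R2 * T) := by
    have hinner : ∀ C : Finset V, ∑ D ∈ P, ww C D
        = P.card * (C.card - 1) + K
          + (if 2 ≤ C.card then 1 else 0) * T
          + R2 * (if C.card = 3 then 1 else 0) := by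
      intro C
      simp_rw [hww C]
      rw [Finset.sum_add_distrib, Finset.sum_add_distrib, Finset.sum_add_distrib,
        Finset.sum_const, smul_eq_mul, ← Finset.mul_sum, ← Finset.sum_mul,
        ← hK_def, ← hT_def, ← hR2_def]
    calc ∑ C ∈ P, ∑ D ∈ P, ww C D
        = ∑ C ∈ P, (P.card * (C.card - 1) + K
            + (if 2 ≤ C.card then 1 else 0) * T
            + R2 * (if C.card = 3 then 1 else 0)) :=
          Finset.sum_congr rfl fun C _ => hinner C
      _ = 2 * (r * K) + 2 * (R2 * T) := by
          rw [Finset.sum_add_distrib, Finset.sum_add_distrib, Finset.sum_add_distrib,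
            Finset.sum_const, smul_eq_mul, ← Finset.mul_sum, ← Finset.mul_sum,
            ← Finset.sum_mul, ← hK_def, ← hT_def, ← hR2_def, hr]
          ring
  have hKr : K + r = n := by
    rw [hr, ← hsum_card]
    rw [hK_def, Finset.card_eq_sum_ones P, ← Finset.sum_add_distrib]
    refine Finset.sum_congr rfl fun C hC => ?_
    have h1 : 1 ≤ C.card := Finset.card_pos.mpr (hP.1 C hC)
    omega
  have hR2r : R2 = r₂ := by
    rw [hr₂, Finset.card_filter]
  have hTr : T + R2 = K := by
    rw [hT_def, hR2_def, hK_def, ← Finset.sum_add_distrib]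
    refine Finset.sum_congr rfl fun C hC => ?_
    have h1 : 1 ≤ C.card := Finset.card_pos.mpr (hP.1 C hC)
    have h3 : C.card ≤ 3 := card_le_three hK4 hP hC
    split_ifs <;> omega
  have hfinal : 2 * e ≤ 2 * (r * K) + 2 * (R2 * T) := hwsum ▸ hmain
  have hE : e ≤ r * K + R2 * T := by linarith
  have hEz : (e : ℤ) ≤ (r : ℤ) * K + (R2 : ℤ) * T := by exact_mod_cast hE
  have hKz : (K : ℤ) = (n : ℤ) - r := by
    have := hKr; push_cast [← this]; ring
  have hTz : (T : ℤ) = (n : ℤ) - r - r₂ := by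
    have h1 := hKr; have h2 := hTr; have h3 := hR2r
    omega
  have hR2z : (R2 : ℤ) = (r₂ : ℤ) := by exact_mod_cast hR2r
  rw [hKz, hTz, hR2z] at hEz
  exact hEz
end

section
/- Let G be a K₄-free simple graph on n vertices with e edges, and let P be a greedy partition of G of size r. Then e ≤ r·(n − r) + (n − r)²/4; equivalently, as integers, 4e ≤ 4r·(n − r) + (n − r)². -/
set_option maxHeartbeats 1000000


/-- If `G` is `K₄`-free on `n` vertices with `e` edges and `P` is a
greedy partition of `G` of size `r`, then `e ≤ r·(n − r) + (n − r)²/4`, i.e. as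
integers `4e ≤ 4r·(n − r) + (n − r)²`. -/
theorem four_e_bound_of_greedy_partition_k4_free
    {V : Type*} [Fintype V] [DecidableEq V]
    (G : SimpleGraph V) [DecidableRel G.Adj]
    (hK4 : G.CliqueFree 4)
    (P : Finset (Finset V)) (hP : IsGreedyPartition G P)
    (n e r : ℕ)
    (hn : n = Fintype.card V)
    (he : e = G.edgeFinset.card)
    (hr : r = P.card) :
    4 * (e : ℤ) ≤ 4 * (r : ℤ) * ((n : ℤ) - r) + ((n : ℤ) - r) ^ 2 := by
  classical
  obtain ⟨hne, hclq, huniq, hgreedy⟩ := hP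
  -- parts are pairwise disjoint
  have pdisj : ∀ C ∈ P, ∀ D ∈ P, C ≠ D → Disjoint C D := by
    intro C hC D hD hCD
    rw [Finset.disjoint_left]
    intro v hvC hvD
    obtain ⟨E, hE, hEu⟩ := huniq v
    exact hCD (((hEu C ⟨hC, hvC⟩).trans (hEu D ⟨hD, hvD⟩).symm))
  -- each part has size between 1 and 3
  have hcard1 : ∀ C ∈ P, 1 ≤ C.card := fun C hC => Finset.card_pos.mpr (hne C hC)
  have hcard3 : ∀ C ∈ P, C.card ≤ 3 := by
    intro C hC
    by_contra h
    push_neg at h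
    obtain ⟨t, htC, ht4⟩ := Finset.exists_subset_card_eq (by omega : 4 ≤ C.card)
    exact hK4 t ⟨(hclq C hC).subset (by exact_mod_cast htC), ht4⟩
  set P1 := P.filter (fun C => C.card = 1) with hP1def
  set P2 := P.filter (fun C => C.card = 2) with hP2def
  set P3 := P.filter (fun C => C.card = 3) with hP3def
  set x := P1.card with hxdef
  set y := P2.card with hydef
  set z := P3.card with hzdef
  have hP1sub : P1 ⊆ P := Finset.filter_subset _ _
  have hP2sub : P2 ⊆ P := Finset.filter_subset _ _
  have hP3sub : P3 ⊆ P := Finset.filter_subset _ _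
  have hPsplit : P = P1 ∪ P2 ∪ P3 := by
    ext C
    simp only [hP1def, hP2def, hP3def, Finset.mem_union, Finset.mem_filter]
    constructor
    · intro h
      have h1 := hcard1 C h
      have h3 := hcard3 C h
      have : C.card = 1 ∨ C.card = 2 ∨ C.card = 3 := by omega
      tauto
    · tauto
  have hd12 : Disjoint P1 P2 := by
    rw [Finset.disjoint_left]
    intro C h1 h2
    simp only [hP1def, hP2def, Finset.mem_filter] at h1 h2
    omega
  have hd13 : Disjoint P1 P3 := by
    rw [Finset.disjoint_left]
    intro C h1 h2
    simp only [hP1def, hP3def, Finset.mem_filter] at h1 h2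
    omega
  have hd23 : Disjoint P2 P3 := by
    rw [Finset.disjoint_left]
    intro C h1 h2
    simp only [hP2def, hP3def, Finset.mem_filter] at h1 h2
    omega
  have hrxyz : r = x + y + z := by
    rw [hr, hPsplit, Finset.card_union_of_disjoint, Finset.card_union_of_disjoint hd12]
    exact Finset.disjoint_union_left.mpr ⟨hd13, hd23⟩
  -- vertex classes
  set A := P1.biUnion id with hAdef
  set B := P2.biUnion id with hBdef
  set T := P3.biUnion id with hTdef
  have hunivP : (Finset.univ : Finset V) = P.biUnion id := by
    ext v
    simp only [Finset.mem_univ, Finset.mem_biUnion, id, true_iff]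
    obtain ⟨C, hC, _⟩ := huniq v
    exact ⟨C, hC.1, hC.2⟩
  have hbu : ∀ (s t : Finset (Finset V)), (s ∪ t).biUnion id = s.biUnion id ∪ t.biUnion id := by
    intro s t
    ext v
    simp only [Finset.mem_biUnion, Finset.mem_union, id]
    constructor
    · rintro ⟨C, (h | h), hv⟩
      · exact Or.inl ⟨C, h, hv⟩
      · exact Or.inr ⟨C, h, hv⟩
    · rintro (⟨C, h, hv⟩ | ⟨C, h, hv⟩)
      · exact ⟨C, Or.inl h, hv⟩
      · exact ⟨C, Or.inr h, hv⟩
  have hunivABT : (Finset.univ : Finset V) = A ∪ B ∪ T := by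
    rw [hunivP, hPsplit, hbu, hbu]
  have pdisj1 : ∀ C ∈ P1, ∀ D ∈ P1, C ≠ D → Disjoint (id C) (id D) :=
    fun C hC D hD h => pdisj C (hP1sub hC) D (hP1sub hD) h
  have pdisj2 : ∀ C ∈ P2, ∀ D ∈ P2, C ≠ D → Disjoint (id C) (id D) :=
    fun C hC D hD h => pdisj C (hP2sub hC) D (hP2sub hD) h
  have pdisj3 : ∀ C ∈ P3, ∀ D ∈ P3, C ≠ D → Disjoint (id C) (id D) :=
    fun C hC D hD h => pdisj C (hP3sub hC) D (hP3sub hD) h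
  have hAcard : A.card = x := by
    rw [hAdef, Finset.card_biUnion pdisj1]
    calc ∑ C ∈ P1, (id C).card = ∑ _C ∈ P1, 1 :=
          Finset.sum_congr rfl (fun C hC => (Finset.mem_filter.mp hC).2)
      _ = x := by rw [Finset.sum_const, smul_eq_mul, mul_one]
  have hBcard : B.card = 2 * y := by
    rw [hBdef, Finset.card_biUnion pdisj2]
    calc ∑ C ∈ P2, (id C).card = ∑ _C ∈ P2, 2 :=
          Finset.sum_congr rfl (fun C hC => (Finset.mem_filter.mp hC).2)
      _ = 2 * y := by rw [Finset.sum_const, smul_eq_mul, mul_comm]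
  have hTcard : T.card = 3 * z := by
    rw [hTdef, Finset.card_biUnion pdisj3]
    calc ∑ C ∈ P3, (id C).card = ∑ _C ∈ P3, 3 :=
          Finset.sum_congr rfl (fun C hC => (Finset.mem_filter.mp hC).2)
      _ = 3 * z := by rw [Finset.sum_const, smul_eq_mul, mul_comm]
  have hnxyz : n = x + 2 * y + 3 * z := by
    have hAB : Disjoint A B := by
      rw [Finset.disjoint_left]
      intro v hvA hvB
      obtain ⟨C, hC, hvC⟩ := Finset.mem_biUnion.mp hvA
      obtain ⟨D, hD, hvD⟩ := Finset.mem_biUnion.mp hvB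
      obtain ⟨E, hE, hEu⟩ := huniq v
      have : C = D := ((hEu C ⟨hP1sub hC, hvC⟩).trans (hEu D ⟨hP2sub hD, hvD⟩).symm)
      subst this
      simp only [hP1def, hP2def, Finset.mem_filter] at hC hD
      omega
    have hABT : Disjoint (A ∪ B) T := by
      rw [Finset.disjoint_left]
      intro v hvAB hvT
      obtain ⟨D, hD, hvD⟩ := Finset.mem_biUnion.mp hvT
      rcases Finset.mem_union.mp hvAB with hvA | hvB
      · obtain ⟨C, hC, hvC⟩ := Finset.mem_biUnion.mp hvA
        obtain ⟨E, hE, hEu⟩ := huniq v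
        have : C = D := ((hEu C ⟨hP1sub hC, hvC⟩).trans (hEu D ⟨hP3sub hD, hvD⟩).symm)
        subst this
        simp only [hP1def, hP3def, Finset.mem_filter] at hC hD
        omega
      · obtain ⟨C, hC, hvC⟩ := Finset.mem_biUnion.mp hvB
        obtain ⟨E, hE, hEu⟩ := huniq v
        have : C = D := ((hEu C ⟨hP2sub hC, hvC⟩).trans (hEu D ⟨hP3sub hD, hvD⟩).symm)
        subst this
        simp only [hP2def, hP3def, Finset.mem_filter] at hC hD
        omega
    have := hunivABT
    rw [hn, ← Finset.card_univ, hunivABT, Finset.card_union_of_disjoint hABT,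
      Finset.card_union_of_disjoint hAB, hAcard, hBcard, hTcard]
  -- per-part neighbour bounds
  have part3 : ∀ (u : V), ∀ C ∈ P, C.card = 3 → (C.filter (G.Adj u)).card ≤ 2 := by
    intro u C hC h3
    by_contra h
    push_neg at h
    have hsub : C.filter (G.Adj u) ⊆ C := Finset.filter_subset _ _
    have hle : C.card ≤ (C.filter (G.Adj u)).card := by omega
    have heq : C.filter (G.Adj u) = C :=
      Finset.eq_of_subset_of_card_le hsub hle
    have hadj : ∀ v ∈ C, G.Adj u v := by
      intro v hv
      rw [← heq] at hv
      exact (Finset.mem_filter.mp hv).2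
    have huC : u ∉ C := fun hu => G.irrefl (hadj u hu)
    refine hK4 (insert u C) ⟨?_, ?_⟩
    · rw [Finset.coe_insert]
      exact (hclq C hC).insert (fun b hb _ => hadj b hb)
    · rw [Finset.card_insert_of_notMem huC, h3]
  have small : ∀ (u : V), ∀ D ∈ P, u ∈ D → D.card ≤ 2 →
      ∀ C ∈ P, C.card ≤ 2 → (C.filter (G.Adj u)).card ≤ 1 := by
    intro u D hD huD hD2 C hC hC2
    by_contra h
    push_neg at h
    obtain ⟨b, hb, b', hb', hbb'⟩ := Finset.one_lt_card.mp h
    have hbC := (Finset.mem_filter.mp hb).1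
    have hub := (Finset.mem_filter.mp hb).2
    have hb'C := (Finset.mem_filter.mp hb').1
    have hub' := (Finset.mem_filter.mp hb').2
    have hbadj : G.Adj b b' := hclq C hC hbC hb'C hbb'
    refine hgreedy 2 (by norm_num) {u, b, b'} ?_ ⟨?_, ?_⟩
    · intro v hv
      simp only [Finset.mem_insert, Finset.mem_singleton] at hv
      rcases hv with rfl | rfl | rfl
      · exact ⟨D, hD, huD, hD2⟩
      · exact ⟨C, hC, hbC, hC2⟩
      · exact ⟨C, hC, hb'C, hC2⟩
    · intro a ha c hc hac
      simp only [Finset.coe_insert, Finset.coe_singleton, Set.mem_insert_iff,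
        Set.mem_singleton_iff] at ha hc
      rcases ha with rfl | rfl | rfl <;> rcases hc with rfl | rfl | rfl <;>
        first
          | exact absurd rfl hac
          | exact hub
          | exact hub'
          | exact hbadj
          | exact hub.symm
          | exact hub'.symm
          | exact hbadj.symm
    · rw [Finset.card_insert_of_notMem, Finset.card_insert_of_notMem, Finset.card_singleton]
      · simp [hbb']
      · simp only [Finset.mem_insert, Finset.mem_singleton]
        push_neg
        exact ⟨hub.ne, hub'.ne⟩
  have sing : ∀ (u : V), ∀ D ∈ P, u ∈ D → D.card = 1 →
      ∀ C ∈ P, C.card = 1 → (C.filter (G.Adj u)).card = 0 := by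
    intro u D hD huD hD1 C hC hC1
    rw [Finset.card_eq_zero, Finset.eq_empty_iff_forall_notMem]
    intro a ha
    have haC := (Finset.mem_filter.mp ha).1
    have hua := (Finset.mem_filter.mp ha).2
    refine hgreedy 1 le_rfl {u, a} ?_ ⟨?_, ?_⟩
    · intro v hv
      simp only [Finset.mem_insert, Finset.mem_singleton] at hv
      rcases hv with rfl | rfl
      · exact ⟨D, hD, huD, hD1.le⟩
      · exact ⟨C, hC, haC, hC1.le⟩
    · intro p hp q hq hpq
      simp only [Finset.coe_insert, Finset.coe_singleton, Set.mem_insert_iff,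
        Set.mem_singleton_iff] at hp hq
      rcases hp with rfl | rfl <;> rcases hq with rfl | rfl <;>
        first
          | exact absurd rfl hpq
          | exact hua
          | exact hua.symm
    · rw [Finset.card_insert_of_notMem (by simp [hua.ne]), Finset.card_singleton]
  -- aggregated neighbour bounds
  have filter_bi : ∀ (u : V) (Q : Finset (Finset V)), Q ⊆ P →
      ((Q.biUnion id).filter (G.Adj u)).card = ∑ C ∈ Q, (C.filter (G.Adj u)).card := by
    intro u Q hQ
    rw [Finset.filter_biUnion]
    exact Finset.card_biUnion (fun C hC D hD h =>
      (pdisj C (hQ hC) D (hQ hD) h).mono (Finset.filter_subset _ _) (Finset.filter_subset _ _))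
  have hNT : ∀ u : V, (T.filter (G.Adj u)).card ≤ 2 * z := by
    intro u
    rw [hTdef, filter_bi u P3 hP3sub]
    calc ∑ C ∈ P3, (C.filter (G.Adj u)).card
        ≤ ∑ _C ∈ P3, 2 := Finset.sum_le_sum (fun C hC =>
          part3 u C (hP3sub hC) (Finset.mem_filter.mp hC).2)
      _ = 2 * z := by rw [Finset.sum_const, smul_eq_mul, mul_comm]
  have hNB : ∀ (u : V), ∀ D ∈ P, u ∈ D → D.card ≤ 2 → (B.filter (G.Adj u)).card ≤ y := by
    intro u D hD huD hD2
    rw [hBdef, filter_bi u P2 hP2sub]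
    calc ∑ C ∈ P2, (C.filter (G.Adj u)).card
        ≤ ∑ _C ∈ P2, 1 := Finset.sum_le_sum (fun C hC =>
          small u D hD huD hD2 C (hP2sub hC) (Finset.mem_filter.mp hC).2.le)
      _ = y := by rw [Finset.sum_const, smul_eq_mul, mul_one]
  have hNA : ∀ (u : V), ∀ D ∈ P, u ∈ D → D.card = 1 → (A.filter (G.Adj u)).card = 0 := by
    intro u D hD huD hD1
    rw [hAdef, filter_bi u P1 hP1sub]
    exact Finset.sum_eq_zero (fun C hC =>
      sing u D hD huD hD1 C (hP1sub hC) (Finset.mem_filter.mp hC).2)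
  -- the double counting
  have memA : ∀ u ∈ A, ∃ D ∈ P, u ∈ D ∧ D.card = 1 := by
    intro u hu
    obtain ⟨C, hC, huC⟩ := Finset.mem_biUnion.mp hu
    exact ⟨C, hP1sub hC, huC, (Finset.mem_filter.mp hC).2⟩
  have memB : ∀ u ∈ B, ∃ D ∈ P, u ∈ D ∧ D.card = 2 := by
    intro u hu
    obtain ⟨C, hC, huC⟩ := Finset.mem_biUnion.mp hu
    exact ⟨C, hP2sub hC, huC, (Finset.mem_filter.mp hC).2⟩
  set nb : Finset V → Finset V → ℕ :=
    fun X Y => ∑ u ∈ X, (Y.filter (G.Adj u)).card with hnbdef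
  have nb_comm : ∀ X Y, nb X Y = nb Y X := by
    intro X Y
    simp only [hnbdef, Finset.card_filter]
    rw [Finset.sum_comm]
    refine Finset.sum_congr rfl (fun v _ => Finset.sum_congr rfl (fun u _ => ?_))
    simp [G.adj_comm]
  have nb_left : ∀ X X' Y, Disjoint X X' → nb (X ∪ X') Y = nb X Y + nb X' Y :=
    fun X X' Y h => Finset.sum_union h
  have nb_right : ∀ X Y Y', Disjoint Y Y' → nb X (Y ∪ Y') = nb X Y + nb X Y' := by
    intro X Y Y' h
    simp only [hnbdef]
    rw [← Finset.sum_add_distrib]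
    refine Finset.sum_congr rfl (fun u _ => ?_)
    rw [Finset.filter_union]
    exact Finset.card_union_of_disjoint
      (h.mono (Finset.filter_subset _ _) (Finset.filter_subset _ _))
  have hAB : Disjoint A B := by
    rw [Finset.disjoint_left]
    intro v hvA hvB
    obtain ⟨C, hC, hvC⟩ := Finset.mem_biUnion.mp hvA
    obtain ⟨D, hD, hvD⟩ := Finset.mem_biUnion.mp hvB
    obtain ⟨E, hE, hEu⟩ := huniq v
    have : C = D := ((hEu C ⟨hP1sub hC, hvC⟩).trans (hEu D ⟨hP2sub hD, hvD⟩).symm)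
    subst this
    simp only [hP1def, hP2def, Finset.mem_filter] at hC hD
    omega
  have hAT : Disjoint A T := by
    rw [Finset.disjoint_left]
    intro v hvA hvT
    obtain ⟨C, hC, hvC⟩ := Finset.mem_biUnion.mp hvA
    obtain ⟨D, hD, hvD⟩ := Finset.mem_biUnion.mp hvT
    obtain ⟨E, hE, hEu⟩ := huniq v
    have : C = D := ((hEu C ⟨hP1sub hC, hvC⟩).trans (hEu D ⟨hP3sub hD, hvD⟩).symm)
    subst this
    simp only [hP1def, hP3def, Finset.mem_filter] at hC hD
    omega
  have hBT : Disjoint B T := by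
    rw [Finset.disjoint_left]
    intro v hvB hvT
    obtain ⟨C, hC, hvC⟩ := Finset.mem_biUnion.mp hvB
    obtain ⟨D, hD, hvD⟩ := Finset.mem_biUnion.mp hvT
    obtain ⟨E, hE, hEu⟩ := huniq v
    have : C = D := ((hEu C ⟨hP2sub hC, hvC⟩).trans (hEu D ⟨hP3sub hD, hvD⟩).symm)
    subst this
    simp only [hP2def, hP3def, Finset.mem_filter] at hC hD
    omega
  have hABT : Disjoint (A ∪ B) T := Finset.disjoint_union_left.mpr ⟨hAT, hBT⟩
  have h2e : 2 * e = nb Finset.univ Finset.univ := by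
    rw [he, ← G.sum_degrees_eq_twice_card_edges]
    simp only [hnbdef]
    refine Finset.sum_congr rfl (fun u _ => ?_)
    rw [← SimpleGraph.neighborFinset_eq_filter, SimpleGraph.degree]
  have hexpand : 2 * e = nb A A + nb A B + nb A T + nb B A + nb B B + nb B T
      + nb T A + nb T B + nb T T := by
    rw [h2e, hunivABT, nb_left _ _ _ hABT, nb_left _ _ _ hAB,
      nb_right _ _ _ hABT, nb_right _ _ _ hABT, nb_right _ _ _ hABT,
      nb_right _ _ _ hAB, nb_right _ _ _ hAB, nb_right _ _ _ hAB]
    ring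
  -- bounds on each block
  have bAA : nb A A = 0 := by
    refine Finset.sum_eq_zero (fun u hu => ?_)
    obtain ⟨D, hD, huD, hD1⟩ := memA u hu
    exact hNA u D hD huD hD1
  have bAB : nb A B ≤ x * y := by
    calc nb A B ≤ ∑ _u ∈ A, y := Finset.sum_le_sum (fun u hu => by
          obtain ⟨D, hD, huD, hD1⟩ := memA u hu
          exact hNB u D hD huD (by omega))
      _ = x * y := by rw [Finset.sum_const, smul_eq_mul, hAcard]
  have bAT : nb A T ≤ x * (2 * z) := by
    calc nb A T ≤ ∑ _u ∈ A, 2 * z := Finset.sum_le_sum (fun u _ => hNT u)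
      _ = x * (2 * z) := by rw [Finset.sum_const, smul_eq_mul, hAcard]
  have bBB : nb B B ≤ 2 * y * y := by
    calc nb B B ≤ ∑ _u ∈ B, y := Finset.sum_le_sum (fun u hu => by
          obtain ⟨D, hD, huD, hD2⟩ := memB u hu
          exact hNB u D hD huD (by omega))
      _ = 2 * y * y := by rw [Finset.sum_const, smul_eq_mul, hBcard]
  have bBT : nb B T ≤ 2 * y * (2 * z) := by
    calc nb B T ≤ ∑ _u ∈ B, 2 * z := Finset.sum_le_sum (fun u _ => hNT u)
      _ = 2 * y * (2 * z) := by rw [Finset.sum_const, smul_eq_mul, hBcard]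
  have bTT : nb T T ≤ 3 * z * (2 * z) := by
    calc nb T T ≤ ∑ _u ∈ T, 2 * z := Finset.sum_le_sum (fun u _ => hNT u)
      _ = 3 * z * (2 * z) := by rw [Finset.sum_const, smul_eq_mul, hTcard]
  have hbound : 2 * e ≤ 2 * (x * y) + 2 * (x * (2 * z)) + 2 * y * y
      + 2 * (2 * y * (2 * z)) + 3 * z * (2 * z) := by
    rw [hexpand, nb_comm B A, nb_comm T A, nb_comm T B]
    omega
  -- finish by arithmetic
  have hnz : (n : ℤ) = (x : ℤ) + 2 * y + 3 * z := by exact_mod_cast congrArg (Nat.cast (R := ℤ)) hnxyz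
  have hrz : (r : ℤ) = (x : ℤ) + y + z := by exact_mod_cast congrArg (Nat.cast (R := ℤ)) hrxyz
  have hbz : 2 * (e : ℤ) ≤ 2 * ((x : ℤ) * y) + 2 * ((x : ℤ) * (2 * z)) + 2 * y * y
      + 2 * (2 * (y : ℤ) * (2 * z)) + 3 * (z : ℤ) * (2 * z) := by exact_mod_cast hbound
  nlinarith [sq_nonneg ((y : ℤ)), hbz, hnz, hrz]
end

section
/- Let G be a triangle-free simple graph on n vertices with e edges, and let P be a greedy partition of G of size r. Then e ≤ r·(n − r). -/
private def gpair {V : Type*} [DecidableEq V] [LinearOrder V] (pt : V → Finset V)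
    (x y : V) : Finset V × Finset V :=
  if (pt x).card = 1 then (pt y, pt x)
  else if (pt y).card = 1 then (pt x, pt y)
  else if pt x = pt y then (pt x, pt x)
  else if (pt x).min ≤ (pt y).min then
    (if (x : WithTop V) = (pt x).min then (pt x, pt y) else (pt y, pt x))
  else
    (if (y : WithTop V) = (pt y).min then (pt y, pt x) else (pt x, pt y))

/-- If `G` is triangle-free on `n` vertices with `e` edges and `P`
is a greedy partition of `G` of size `r`, then `e ≤ r·(n − r)`. -/
theorem edge_bound_of_greedy_partition_triangle_free
    {V : Type*} [Fintype V] [DecidableEq V]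
    (G : SimpleGraph V) [DecidableRel G.Adj]
    (htf : G.CliqueFree 3)
    (P : Finset (Finset V)) (hP : IsGreedyPartition G P)
    (n e r : ℕ)
    (hn : n = Fintype.card V)
    (he : e = G.edgeFinset.card)
    (hr : r = P.card) :
    (e : ℤ) ≤ (r : ℤ) * ((n : ℤ) - r) := by
  letI : LinearOrder V := LinearOrder.lift' (Fintype.equivFin V) (Equiv.injective _)
  obtain ⟨hne, hclique, hpart, hgreedy⟩ := hP
  set pt : V → Finset V := fun v => P.choose (fun C => v ∈ C) (hpart v) with hptdef
  have hptP : ∀ v, pt v ∈ P := fun v => Finset.choose_mem _ _ _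
  have hvpt : ∀ v, v ∈ pt v := fun v => Finset.choose_property (fun C => v ∈ C) P (hpart v)
  have hpt_eq : ∀ v (C : Finset V), C ∈ P → v ∈ C → pt v = C := fun v C hC hv =>
    (hpart v).unique ⟨hptP v, hvpt v⟩ ⟨hC, hv⟩
  have hcard1 : ∀ C ∈ P, 1 ≤ C.card := fun C hC => Finset.card_pos.2 (hne C hC)
  have hcard2 : ∀ C ∈ P, C.card ≤ 2 := by
    intro C hC
    by_contra h
    push_neg at h
    obtain ⟨t, htC, ht3⟩ := Finset.exists_subset_card_eq (by omega : 3 ≤ C.card)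
    exact htf t ⟨(hclique C hC).subset (by exact_mod_cast Finset.coe_subset.2 htC), ht3⟩
  have card12 : ∀ v : V, (pt v).card = 1 ∨ (pt v).card = 2 := by
    intro v
    have h1 := hcard1 _ (hptP v)
    have h2 := hcard2 _ (hptP v)
    omega
  have tri : ∀ a b c : V, G.Adj a b → G.Adj a c → G.Adj b c → False := by
    intro a b c h1 h2 h3
    exact htf {a, b, c} (SimpleGraph.is3Clique_triple_iff.2 ⟨h1, h2, h3⟩)
  have same_pt_adj : ∀ u v : V, u ≠ v → pt u = pt v → G.Adj u v := by
    intro u v huv h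
    exact hclique (pt u) (hptP u) (hvpt u) (h ▸ hvpt v) huv
  have shared : ∀ c z z' : V, G.Adj c z → G.Adj c z' → z ≠ z' → pt z = pt z' → False := by
    intro c z z' h1 h2 hzz hp
    exact tri c z z' h1 h2 (same_pt_adj z z' hzz hp)
  have not_both1 : ∀ a b : V, G.Adj a b → (pt a).card = 1 → (pt b).card = 1 → False := by
    intro a b hadj h1 h2
    refine hgreedy 1 le_rfl {a, b} ?_ ?_
    · intro v hv
      rw [Finset.mem_insert, Finset.mem_singleton] at hv
      rcases hv with rfl | rfl
      · exact ⟨pt v, hptP v, hvpt v, h1.le⟩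
      · exact ⟨pt v, hptP v, hvpt v, h2.le⟩
    · refine ⟨?_, Finset.card_pair hadj.ne⟩
      rw [Finset.coe_insert, Finset.coe_singleton]
      exact SimpleGraph.isClique_pair.2 (fun _ => hadj)
  have hmins : ∀ X Y : Finset V, X ∈ P → Y ∈ P → X ≠ Y → X.min ≠ Y.min := by
    intro X Y hX hY hXY h
    obtain ⟨a, ha⟩ := Finset.min_of_nonempty (hne X hX)
    have haX := Finset.mem_of_min ha
    have haY : a ∈ Y := Finset.mem_of_min (by rw [← h, ha])
    exact hXY ((hpt_eq a X hX haX).symm.trans (hpt_eq a Y hY haY))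
  have two_mem : ∀ C : Finset V, C.card = 2 → ∀ u v : V, u ∈ C → v ∈ C → u ≠ v →
      C = {u, v} := by
    intro C hC u v hu hv huv
    refine (Finset.eq_of_subset_of_card_le ?_ ?_).symm
    · intro w hw
      rw [Finset.mem_insert, Finset.mem_singleton] at hw
      rcases hw with rfl | rfl
      · exact hu
      · exact hv
    · rw [hC, Finset.card_pair huv]
  have min_elem : ∀ C : Finset V, C.card = 2 → ∀ z z' : V, z ∈ C → z' ∈ C →
      (z : WithTop V) ≠ C.min → (z' : WithTop V) ≠ C.min → z = z' := by
    intro C hC z z' hz hz' h1 h2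
    by_contra hne'
    have hCzz := two_mem C hC z z' hz hz' hne'
    obtain ⟨a, ha⟩ := Finset.min_of_mem hz
    have haC := Finset.mem_of_min ha
    rw [hCzz, Finset.mem_insert, Finset.mem_singleton] at haC
    rcases haC with rfl | rfl
    · exact h1 ha.symm
    · exact h2 ha.symm
  have hchar : ∀ x y : V, x < y → G.Adj x y → ∀ X Y : Finset V,
      gpair pt x y = (X, Y) →
      X ∈ P ∧ X.card = 2 ∧ Y ∈ P ∧
      ((Y.card = 1 ∧ ((x ∈ Y ∧ y ∈ X) ∨ (y ∈ Y ∧ x ∈ X))) ∨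
       (X = Y ∧ x ∈ X ∧ y ∈ X) ∨
       (X ≠ Y ∧ Y.card = 2 ∧ ∃ w z : V, ((w = x ∧ z = y) ∨ (w = y ∧ z = x)) ∧
          w ∈ X ∧ z ∈ Y ∧
          ((X.min ≤ Y.min ∧ (w : WithTop V) = X.min) ∨
           (Y.min < X.min ∧ (z : WithTop V) ≠ Y.min)))) := by
    intro x y hlt hadj X Y hg
    unfold gpair at hg
    split_ifs at hg with h1 h2 h3 h4 h5 h6
    · -- (pt x).card = 1
      injection hg with hg1 hg2; subst hg1; subst hg2
      have hy2 : (pt y).card = 2 := by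
        rcases card12 y with h | h
        · exact absurd h (fun h => not_both1 x y hadj h1 h)
        · exact h
      exact ⟨hptP y, hy2, hptP x, Or.inl ⟨h1, Or.inl ⟨hvpt x, hvpt y⟩⟩⟩
    · injection hg with hg1 hg2; subst hg1; subst hg2
      have hx2 : (pt x).card = 2 := by rcases card12 x with h | h; exact absurd h h1; exact h
      exact ⟨hptP x, hx2, hptP y, Or.inl ⟨h2, Or.inr ⟨hvpt y, hvpt x⟩⟩⟩
    · injection hg with hg1 hg2; subst hg1; subst hg2
      have hx2 : (pt x).card = 2 := by rcases card12 x with h | h; exact absurd h h1; exact h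
      exact ⟨hptP x, hx2, hptP x, Or.inr (Or.inl ⟨rfl, hvpt x, h3 ▸ hvpt y⟩)⟩
    · injection hg with hg1 hg2; subst hg1; subst hg2
      have hx2 : (pt x).card = 2 := by rcases card12 x with h | h; exact absurd h h1; exact h
      have hy2 : (pt y).card = 2 := by rcases card12 y with h | h; exact absurd h h2; exact h
      exact ⟨hptP x, hx2, hptP y, Or.inr (Or.inr ⟨h3, hy2, x, y, Or.inl ⟨rfl, rfl⟩,
        hvpt x, hvpt y, Or.inl ⟨h4, h5⟩⟩)⟩
    · injection hg with hg1 hg2; subst hg1; subst hg2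
      have hx2 : (pt x).card = 2 := by rcases card12 x with h | h; exact absurd h h1; exact h
      have hy2 : (pt y).card = 2 := by rcases card12 y with h | h; exact absurd h h2; exact h
      refine ⟨hptP y, hy2, hptP x, Or.inr (Or.inr ⟨fun hh => h3 hh.symm, hx2, y, x,
        Or.inr ⟨rfl, rfl⟩, hvpt y, hvpt x, Or.inr ⟨?_, h5⟩⟩)⟩
      exact lt_of_le_of_ne h4 (hmins _ _ (hptP x) (hptP y) h3)
    · injection hg with hg1 hg2; subst hg1; subst hg2
      have hx2 : (pt x).card = 2 := by rcases card12 x with h | h; exact absurd h h1; exact h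
      have hy2 : (pt y).card = 2 := by rcases card12 y with h | h; exact absurd h h2; exact h
      exact ⟨hptP y, hy2, hptP x, Or.inr (Or.inr ⟨fun hh => h3 hh.symm, hx2, y, x,
        Or.inr ⟨rfl, rfl⟩, hvpt y, hvpt x, Or.inl ⟨(lt_of_not_ge h4).le, h6⟩⟩)⟩
    · injection hg with hg1 hg2; subst hg1; subst hg2
      have hx2 : (pt x).card = 2 := by rcases card12 x with h | h; exact absurd h h1; exact h
      have hy2 : (pt y).card = 2 := by rcases card12 y with h | h; exact absurd h h2; exact h
      exact ⟨hptP x, hx2, hptP y, Or.inr (Or.inr ⟨h3, hy2, x, y, Or.inl ⟨rfl, rfl⟩,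
        hvpt x, hvpt y, Or.inr ⟨lt_of_not_ge h4, h6⟩⟩)⟩
  have hcomm : ∀ a b : V, gpair pt (min a b) (max a b) = gpair pt (min b a) (max b a) := by
    intro a b
    rw [min_comm, max_comm]
  set fsym : Sym2 V → Finset V × Finset V :=
    Sym2.lift ⟨fun a b => gpair pt (min a b) (max a b), hcomm⟩ with hfsym
  have hfs : ∀ a b : V, fsym s(a, b) = gpair pt (min a b) (max a b) := by
    intro a b
    rw [hfsym]
    exact Sym2.lift_mk _ a b
  have hrep : ∀ s ∈ G.edgeFinset, ∃ x y : V, x < y ∧ G.Adj x y ∧ s = s(x, y) ∧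
      fsym s = gpair pt x y := by
    intro s hs
    induction s using Sym2.ind with
    | _ a b =>
      rw [SimpleGraph.mem_edgeFinset, SimpleGraph.mem_edgeSet] at hs
      rcases lt_or_gt_of_ne hs.ne with h | h
      · exact ⟨a, b, h, hs, rfl, by rw [hfs, min_eq_left h.le, max_eq_right h.le]⟩
      · exact ⟨b, a, h, hs.symm, Sym2.eq_swap.symm, by
          rw [hfs, min_eq_right h.le, max_eq_left h.le]⟩
  set Q : Finset (Finset V) := P.filter (fun C => C.card = 2) with hQdef
  have hmaps : ∀ s ∈ G.edgeFinset, fsym s ∈ Q ×ˢ P := by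
    intro s hs
    obtain ⟨x, y, hlt, hadj, rfl, hfx⟩ := hrep s hs
    have hc := hchar x y hlt hadj (gpair pt x y).1 (gpair pt x y).2 rfl
    rw [Finset.mem_product, hfx]
    exact ⟨Finset.mem_filter.2 ⟨hc.1, hc.2.1⟩, hc.2.2.1⟩
  have finish : ∀ x y x' y' w z z' : V, x < y → x' < y' → G.Adj x y → G.Adj x' y' →
      ((w = x ∧ z = y) ∨ (w = y ∧ z = x)) → ((w = x' ∧ z' = y') ∨ (w = y' ∧ z' = x')) →
      pt z = pt z' → x = x' ∧ y = y' := by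
    intro x y x' y' w z z' hxy hxy' ha ha' hd hd' hpz
    have hwz : G.Adj w z := by
      rcases hd with ⟨rfl, rfl⟩ | ⟨rfl, rfl⟩
      · exact ha
      · exact ha.symm
    have hwz' : G.Adj w z' := by
      rcases hd' with ⟨rfl, rfl⟩ | ⟨rfl, rfl⟩
      · exact ha'
      · exact ha'.symm
    have hzz : z = z' := by
      by_contra hne'
      exact shared w z z' hwz hwz' hne' hpz
    subst hzz
    rcases hd with ⟨rfl, rfl⟩ | ⟨rfl, rfl⟩ <;> rcases hd' with ⟨hh1, hh2⟩ | ⟨hh1, hh2⟩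
    · exact ⟨hh1, hh2⟩
    · exfalso
      rw [← hh1, ← hh2] at hxy'
      exact lt_asymm hxy hxy'
    · exfalso
      rw [← hh1, ← hh2] at hxy'
      exact lt_asymm hxy hxy'
    · exact ⟨hh2, hh1⟩
  have hinj : Set.InjOn fsym (G.edgeFinset : Set (Sym2 V)) := by
    intro s hs t ht hst
    obtain ⟨x, y, hxy, haxy, rfl, hfx⟩ := hrep s hs
    obtain ⟨x', y', hxy', haxy', rfl, hfx'⟩ := hrep t ht
    have heqg : gpair pt x y = gpair pt x' y' := by rw [← hfx, ← hfx', hst]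
    have hc := hchar x y hxy haxy (gpair pt x y).1 (gpair pt x y).2 rfl
    have hc' := hchar x' y' hxy' haxy' (gpair pt x y).1 (gpair pt x y).2 (by rw [heqg])
    set X := (gpair pt x y).1 with hX
    set Y := (gpair pt x y).2 with hY
    obtain ⟨hXP, hX2, hYP, hd⟩ := hc
    obtain ⟨-, -, -, hd'⟩ := hc'
    suffices h : x = x' ∧ y = y' by rw [h.1, h.2]
    rcases hd with ⟨hY1, hm⟩ | ⟨hXY, hx, hy⟩ | ⟨hXY, hY2, w, z, hwz, hwX, hzY, hor⟩ <;>
      rcases hd' with ⟨hY1', hm'⟩ | ⟨hXY', hx', hy'⟩ | ⟨hXY', hY2', w', z', hwz', hwX', hzY', hor'⟩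
    · -- both singleton cases
      obtain ⟨w0, hw0⟩ := Finset.card_eq_one.1 hY1
      have hdec : ∃ zz, ((w0 = x ∧ zz = y) ∨ (w0 = y ∧ zz = x)) ∧ zz ∈ X := by
        rcases hm with ⟨hh1, hh2⟩ | ⟨hh1, hh2⟩
        · rw [hw0, Finset.mem_singleton] at hh1
          exact ⟨y, Or.inl ⟨hh1.symm, rfl⟩, hh2⟩
        · rw [hw0, Finset.mem_singleton] at hh1
          exact ⟨x, Or.inr ⟨hh1.symm, rfl⟩, hh2⟩
      have hdec' : ∃ zz, ((w0 = x' ∧ zz = y') ∨ (w0 = y' ∧ zz = x')) ∧ zz ∈ X := by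
        rcases hm' with ⟨hh1, hh2⟩ | ⟨hh1, hh2⟩
        · rw [hw0, Finset.mem_singleton] at hh1
          exact ⟨y', Or.inl ⟨hh1.symm, rfl⟩, hh2⟩
        · rw [hw0, Finset.mem_singleton] at hh1
          exact ⟨x', Or.inr ⟨hh1.symm, rfl⟩, hh2⟩
      obtain ⟨zz, hzz1, hzz2⟩ := hdec
      obtain ⟨zz', hzz1', hzz2'⟩ := hdec'
      exact finish x y x' y' w0 zz zz' hxy hxy' haxy haxy' hzz1 hzz1'
        ((hpt_eq zz X hXP hzz2).trans (hpt_eq zz' X hXP hzz2').symm)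
    · exfalso
      rw [hXY'] at hX2
      omega
    · exfalso
      omega
    · exfalso
      rw [hXY] at hX2
      omega
    · -- both internal
      have hXxy := two_mem X hX2 x y hx hy (ne_of_lt hxy)
      rw [hXxy, Finset.mem_insert, Finset.mem_singleton] at hx' hy'
      rcases hx' with rfl | rfl <;> rcases hy' with rfl | rfl
      · exact absurd hxy' (lt_irrefl _)
      · exact ⟨rfl, rfl⟩
      · exact absurd (hxy.trans hxy') (lt_irrefl _)
      · exact absurd hxy' (lt_irrefl _)
    · exact absurd hXY hXY'
    · exfalso
      omega
    · exact absurd hXY' hXY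
    · -- both cross cases
      rcases hor with ⟨hle, hwmin⟩ | ⟨hlt', hzmin⟩ <;> rcases hor' with ⟨hle', hwmin'⟩ | ⟨hlt'', hzmin'⟩
      · have hww : w = w' := by
          have : (w : WithTop V) = (w' : WithTop V) := by rw [hwmin, hwmin']
          exact_mod_cast this
        subst hww
        exact finish x y x' y' w z z' hxy hxy' haxy haxy' hwz hwz'
          ((hpt_eq z Y hYP hzY).trans (hpt_eq z' Y hYP hzY').symm)
      · exact absurd hle (not_le_of_gt hlt'')
      · exact absurd hle' (not_le_of_gt hlt')
      · have hzz : z = z' := min_elem Y hY2 z z' hzY hzY' hzmin hzmin'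
        subst hzz
        have hd1 : ((z = x ∧ w = y) ∨ (z = y ∧ w = x)) := by
          rcases hwz with ⟨hh1, hh2⟩ | ⟨hh1, hh2⟩
          · exact Or.inr ⟨hh2, hh1⟩
          · exact Or.inl ⟨hh2, hh1⟩
        have hd2 : ((z = x' ∧ w' = y') ∨ (z = y' ∧ w' = x')) := by
          rcases hwz' with ⟨hh1, hh2⟩ | ⟨hh1, hh2⟩
          · exact Or.inr ⟨hh2, hh1⟩
          · exact Or.inl ⟨hh2, hh1⟩
        exact finish x y x' y' z w w' hxy hxy' haxy haxy' hd1 hd2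
          ((hpt_eq w X hXP hwX).trans (hpt_eq w' X hXP hwX').symm)
  have hcount : G.edgeFinset.card ≤ Q.card * P.card := by
    have h := Finset.card_le_card_of_injOn fsym hmaps hinj
    rwa [Finset.card_product] at h
  have hfiber : ∀ C ∈ P, Finset.univ.filter (fun v => pt v = C) = C := by
    intro C hC
    ext v
    simp only [Finset.mem_filter, Finset.mem_univ, true_and]
    constructor
    · rintro rfl
      exact hvpt v
    · intro hv
      exact hpt_eq v C hC hv
  have hnsum : Fintype.card V = ∑ C ∈ P, C.card := by
    rw [← Finset.card_univ, Finset.card_eq_sum_card_fiberwise (fun v _ => hptP v)]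
    exact Finset.sum_congr rfl (fun C hC => by rw [hfiber C hC])
  have hsum2 : ∑ C ∈ P, C.card = 2 * Q.card + (P.filter (fun C => ¬ C.card = 2)).card := by
    rw [← Finset.sum_filter_add_sum_filter_not P (fun C => C.card = 2)]
    congr 1
    · rw [Finset.sum_congr rfl (fun C hC => (Finset.mem_filter.1 hC).2),
        Finset.sum_const, smul_eq_mul, mul_comm]
    · rw [Finset.sum_congr rfl (fun C hC => ?_), Finset.sum_const, smul_eq_mul, mul_one]
      have h1 := hcard1 C (Finset.mem_filter.1 hC).1
      have h2 := hcard2 C (Finset.mem_filter.1 hC).1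
      have h3 := (Finset.mem_filter.1 hC).2
      omega
  have hQP : Q.card + (P.filter (fun C => ¬ C.card = 2)).card = P.card :=
    Finset.card_filter_add_card_filter_not _
  have h1 : n = 2 * Q.card + (P.filter (fun C => ¬ C.card = 2)).card := by
    rw [hn, hnsum, hsum2]
  have h2 : Q.card + (P.filter (fun C => ¬ C.card = 2)).card = r := by rw [hr, hQP]
  have h3 : e ≤ Q.card * r := by rw [he, hr]; exact hcount
  have hQr : (Q.card : ℤ) = (n : ℤ) - r := by omega
  calc (e : ℤ) ≤ (Q.card : ℤ) * r := by exact_mod_cast h3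
    _ = (r : ℤ) * ((n : ℤ) - r) := by rw [hQr]; ring
end

section
/- Every finite simple graph G admits at least one greedy partition: there exists a partition of the vertex set of G into parts each inducing a clique such that for every l ≥ 1 the union of all parts of size at most l induces a subgraph of G containing no complete subgraph on l+1 vertices. -/
/-- Auxiliary: on any vertex finset `s` there is a partition into cliques,
obtained by repeatedly removing a maximum clique, such that every clique
`t ⊆ s` meets some part of size at least `t.card`. -/
lemma exists_greedy_aux {V : Type*} [Fintype V] [DecidableEq V]
    (G : SimpleGraph V) :
    ∀ n (s : Finset V), s.card ≤ n → ∃ P : Finset (Finset V),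
      (∀ C ∈ P, C.Nonempty) ∧
      (∀ C ∈ P, G.IsClique (C : Set V)) ∧
      (∀ C ∈ P, C ⊆ s) ∧
      (∀ v ∈ s, ∃! C, C ∈ P ∧ v ∈ C) ∧
      (∀ t : Finset V, t ⊆ s → G.IsClique (t : Set V) → t.Nonempty →
        ∃ C ∈ P, (t ∩ C).Nonempty ∧ t.card ≤ C.card) := by
  classical
  intro n
  induction n with
  | zero =>
    intro s hs
    have : s = ∅ := Finset.card_eq_zero.mp (Nat.le_zero.mp hs)
    subst this
    refine ⟨∅, ?_, ?_, ?_, ?_, ?_⟩ <;> simp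
  | succ n ih =>
    intro s hs
    rcases s.eq_empty_or_nonempty with rfl | ⟨v, hv⟩
    · refine ⟨∅, ?_, ?_, ?_, ?_, ?_⟩ <;> simp
    -- candidates: cliques inside s
    set cand : Finset (Finset V) := s.powerset.filter (fun C => G.IsClique (C : Set V)) with hcand
    have hsing : ({v} : Finset V) ∈ cand := by
      simp [hcand, Finset.singleton_subset_iff, hv]
    obtain ⟨C, hCc, hCmax⟩ := cand.exists_max_image Finset.card ⟨_, hsing⟩
    have hCs : C ⊆ s := (Finset.mem_filter.mp hCc).1 |> Finset.mem_powerset.mp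
    have hCcl : G.IsClique (C : Set V) := (Finset.mem_filter.mp hCc).2
    have hCne : C.Nonempty := by
      have := hCmax _ hsing
      simp only [Finset.card_singleton] at this
      exact Finset.card_pos.mp (by omega)
    have hcard : (s \ C).card ≤ n := by
      have h1 : (s \ C).card < s.card := by
        apply Finset.card_lt_card
        constructor
        · exact Finset.sdiff_subset
        · intro hsub
          obtain ⟨x, hx⟩ := hCne
          have := hsub (hCs hx)
          simp [Finset.mem_sdiff, hx] at this
      omega
    obtain ⟨P', h1, h2, h3, h4, h5⟩ := ih (s \ C) hcard
    have hCnot : C ∉ P' := by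
      intro h
      obtain ⟨x, hx⟩ := hCne
      have := h3 C h hx
      simp [Finset.mem_sdiff, hx] at this
    refine ⟨insert C P', ?_, ?_, ?_, ?_, ?_⟩
    · intro D hD
      rcases Finset.mem_insert.mp hD with rfl | hD
      · exact hCne
      · exact h1 D hD
    · intro D hD
      rcases Finset.mem_insert.mp hD with rfl | hD
      · exact hCcl
      · exact h2 D hD
    · intro D hD
      rcases Finset.mem_insert.mp hD with rfl | hD
      · exact hCs
      · exact (h3 D hD).trans Finset.sdiff_subset
    · intro w hw
      by_cases hwC : w ∈ C
      · refine ⟨C, ⟨Finset.mem_insert_self _ _, hwC⟩, ?_⟩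
        rintro D ⟨hD, hwD⟩
        rcases Finset.mem_insert.mp hD with rfl | hD
        · rfl
        · have := h3 D hD hwD
          simp [Finset.mem_sdiff, hwC] at this
      · have hw' : w ∈ s \ C := Finset.mem_sdiff.mpr ⟨hw, hwC⟩
        obtain ⟨D, ⟨hD, hwD⟩, huniq⟩ := h4 w hw'
        refine ⟨D, ⟨Finset.mem_insert_of_mem hD, hwD⟩, ?_⟩
        rintro E ⟨hE, hwE⟩
        rcases Finset.mem_insert.mp hE with rfl | hE
        · exact absurd hwE hwC
        · exact huniq E ⟨hE, hwE⟩
    · intro t hts htcl htne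
      by_cases hint : (t ∩ C).Nonempty
      · refine ⟨C, Finset.mem_insert_self _ _, hint, ?_⟩
        apply hCmax
        simp [hcand, Finset.mem_powerset, hts, htcl]
      · have hts' : t ⊆ s \ C := by
          intro x hx
          refine Finset.mem_sdiff.mpr ⟨hts hx, fun hxC => hint ⟨x, Finset.mem_inter.mpr ⟨hx, hxC⟩⟩⟩
        obtain ⟨D, hD, hint', hle⟩ := h5 t hts' htcl htne
        exact ⟨D, Finset.mem_insert_of_mem hD, hint', hle⟩

/-- Every finite simple graph admits at least one greedy
partition. -/
theorem exists_greedy_partition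
    {V : Type*} [Fintype V] [DecidableEq V] (G : SimpleGraph V) :
    ∃ P : Finset (Finset V), IsGreedyPartition G P := by
  classical
  obtain ⟨P, h1, h2, h3, h4, h5⟩ :=
    exists_greedy_aux G (Finset.univ.card) (Finset.univ : Finset V) le_rfl
  refine ⟨P, h1, h2, fun v => h4 v (Finset.mem_univ v), ?_⟩
  intro l hl t ht hcl
  have htne : t.Nonempty := by
    rw [← Finset.card_pos, hcl.2]; omega
  obtain ⟨C, hC, ⟨x, hx⟩, hle⟩ := h5 t (Finset.subset_univ t) hcl.1 htne
  rw [Finset.mem_inter] at hx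
  obtain ⟨D, hD, hxD, hDle⟩ := ht x hx.1
  obtain ⟨E, hE, huniq⟩ := h4 x (Finset.mem_univ x)
  have e1 := huniq C ⟨hC, hx.2⟩
  have e2 := huniq D ⟨hD, hxD⟩
  rw [hcl.2] at hle
  subst e1; subst e2
  omega
end
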